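/- arXiv:2008.00919 — 6 statements merged into one kernel-verified Lean document; each statement's English description precedes it below -/
import Mathlib

section
/- Let q_s, q_t ∈ (0,1]. Suppose (g₁,g₂) : ℕ × ℕ → ℂ satisfies g₁(n+2) = g₁(n) + p_s g₂(n+1) + p_t g₂(n) and g₂(n+2) = g₂(n) + p_t g₁(n+2) + p_s g₁(n+1) for all n, where p_s = (q_s-1)/√q_s and p_t = (q_t-1)/√q_t, and suppose g₁(n) → 0 and g₂(n) → 0 as n → ∞. Then there exist a,b,c ∈ ℂ such that g₁(n) = a q_s^{n/2}q_t^{n/2} + b(-1)^n q_s^{-n/2}q_t^{n/2} + c(-1)^n q_s^{n/2}q_t^{-n/2} and g₂(n) = a q_s^{n/2}q_t^{(n+1)/2} + b(-1)^n q_s^{-n/2}q_t^{(n+1)/2} + c(-1)^{n+1} q_s^{n/2}q_t^{-(n+1)/2} for all n. Moreover, if q_s < q_t then b = 0, and if q_s > q_t then c = 0. -/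
open Filter


private lemma aux_mul_pow {u : ℕ → ℂ} (hu : Tendsto u atTop (nhds 0)) {z : ℂ} (hz : ‖z‖ ≤ 1) :
    Tendsto (fun n => u n * z ^ n) atTop (nhds 0) := by
  refine squeeze_zero_norm (fun n => ?_) (by simpa using hu.norm)
  rw [norm_mul]
  calc ‖u n‖ * ‖z ^ n‖ ≤ ‖u n‖ * 1 := by
        refine mul_le_mul_of_nonneg_left ?_ (norm_nonneg _)
        rw [norm_pow]; exact pow_le_one₀ (norm_nonneg z) hz
    _ = ‖u n‖ := mul_one _

private lemma aux_lim3 (a b e : ℂ) (w1 w2 : ℂ) (h1 : ‖w1‖ < 1) (h2 : ‖w2‖ < 1) :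
    Tendsto (fun n : ℕ => a * w1 ^ n + b * w2 ^ n + e) atTop (nhds e) := by
  have t1 := (tendsto_pow_atTop_nhds_zero_of_norm_lt_one h1).const_mul a
  have t2 := (tendsto_pow_atTop_nhds_zero_of_norm_lt_one h2).const_mul b
  have t3 : Tendsto (fun _ : ℕ => e) atTop (nhds e) := tendsto_const_nhds
  have := (t1.add t2).add t3
  simpa using this

private lemma aux_lim4 (a b c e : ℂ) (w1 w2 w3 : ℂ) (h1 : ‖w1‖ < 1) (h2 : ‖w2‖ < 1)
    (h3 : ‖w3‖ < 1) :
    Tendsto (fun n : ℕ => a * w1 ^ n + b * w2 ^ n + c * w3 ^ n + e) atTop (nhds e) := by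
  have t1 := (tendsto_pow_atTop_nhds_zero_of_norm_lt_one h1).const_mul a
  have t2 := (tendsto_pow_atTop_nhds_zero_of_norm_lt_one h2).const_mul b
  have t3 := (tendsto_pow_atTop_nhds_zero_of_norm_lt_one h3).const_mul c
  have t4 : Tendsto (fun _ : ℕ => e) atTop (nhds e) := tendsto_const_nhds
  have := ((t1.add t2).add t3).add t4
  simpa using this

private lemma extract3 {u : ℕ → ℂ} (hu : Tendsto u atTop (nhds 0))
    (a b e w1 w2 : ℂ) (h1 : ‖w1‖ < 1) (h2 : ‖w2‖ < 1)
    (heq : ∀ n, u n = a * w1 ^ n + b * w2 ^ n + e) : e = 0 := by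
  refine tendsto_nhds_unique ?_ hu
  rw [show u = fun n => a * w1 ^ n + b * w2 ^ n + e from funext heq]
  exact aux_lim3 a b e w1 w2 h1 h2

private lemma extract4 {u : ℕ → ℂ} (hu : Tendsto u atTop (nhds 0))
    (a b c e w1 w2 w3 : ℂ) (h1 : ‖w1‖ < 1) (h2 : ‖w2‖ < 1) (h3 : ‖w3‖ < 1)
    (heq : ∀ n, u n = a * w1 ^ n + b * w2 ^ n + c * w3 ^ n + e) : e = 0 := by
  refine tendsto_nhds_unique ?_ hu
  rw [show u = fun n => a * w1 ^ n + b * w2 ^ n + c * w3 ^ n + e from funext heq]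
  exact aux_lim4 a b c e w1 w2 w3 h1 h2 h3

private lemma aux_even : Tendsto (fun n : ℕ => 2 * n) atTop atTop :=
  tendsto_atTop_mono (fun n => by show n ≤ _; omega) tendsto_id

private lemma aux_odd : Tendsto (fun n : ℕ => 2 * n + 1) atTop atTop :=
  tendsto_atTop_mono (fun n => by show n ≤ _; omega) tendsto_id


private noncomputable def F1 (S T a b c d : ℂ) (n : ℕ) : ℂ :=
  a * (S * T) ^ n + b * (-T / S) ^ n + c * (-S / T) ^ n + d * ((S * T)⁻¹) ^ n

private noncomputable def F2 (S T a b c d : ℂ) (n : ℕ) : ℂ :=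
  a * T * (S * T) ^ n + b * T * (-T / S) ^ n - (c / T) * (-S / T) ^ n - (d / T) * ((S * T)⁻¹) ^ n

private lemma F_unique (S T : ℂ) (hS : S ≠ 0) (hT : T ≠ 0)
    (g1 g2 : ℕ → ℂ)
    (hrec1 : ∀ n, g1 (n + 2) = g1 n + (S - S⁻¹) * g2 (n + 1) + (T - T⁻¹) * g2 n)
    (hrec2 : ∀ n, g2 (n + 2) = g2 n + (T - T⁻¹) * g1 (n + 2) + (S - S⁻¹) * g1 (n + 1))
    (a b c d : ℂ)
    (h10 : g1 0 = F1 S T a b c d 0) (h11 : g1 1 = F1 S T a b c d 1)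
    (h20 : g2 0 = F2 S T a b c d 0) (h21 : g2 1 = F2 S T a b c d 1) :
    ∀ n, g1 n = F1 S T a b c d n ∧ g2 n = F2 S T a b c d n := by
  have r1a : (S*T)^2 = 1 + (S - S⁻¹)*(T*(S*T)) + (T - T⁻¹)*T := by
    field_simp; try ring_nf; try field_simp; try ring
  have r1b : (-T/S)^2 = 1 + (S - S⁻¹)*(T*(-T/S)) + (T - T⁻¹)*T := by
    field_simp; try ring_nf; try field_simp; try ring
  have r1c : (-S/T)^2 = 1 + (S - S⁻¹)*(-(1/T)*(-S/T)) + (T - T⁻¹)*(-(1/T)) := by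
    field_simp; try ring_nf; try field_simp; try ring
  have r1d : ((S*T)⁻¹)^2 = 1 + (S - S⁻¹)*(-(1/T)*(S*T)⁻¹) + (T - T⁻¹)*(-(1/T)) := by
    field_simp; try ring_nf; try field_simp; try ring
  have r2a : T*(S*T)^2 = T + (T - T⁻¹)*(S*T)^2 + (S - S⁻¹)*(S*T) := by
    field_simp; try ring_nf; try field_simp; try ring
  have r2b : T*(-T/S)^2 = T + (T - T⁻¹)*(-T/S)^2 + (S - S⁻¹)*(-T/S) := by
    field_simp; try ring_nf; try field_simp; try ring
  have r2c : -(1/T)*(-S/T)^2 = -(1/T) + (T - T⁻¹)*(-S/T)^2 + (S - S⁻¹)*(-S/T) := by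
    field_simp; try ring_nf; try field_simp; try ring
  have r2d : -(1/T)*((S*T)⁻¹)^2 = -(1/T) + (T - T⁻¹)*((S*T)⁻¹)^2 + (S - S⁻¹)*(S*T)⁻¹ := by
    field_simp; try ring_nf; try field_simp; try ring
  have id1' : ∀ u1 u2 u3 u4 : ℂ,
      a * (u1 * (S * T) ^ 2) + b * (u2 * (-T / S) ^ 2) + c * (u3 * (-S / T) ^ 2)
        + d * (u4 * ((S * T)⁻¹) ^ 2)
      = (a * u1 + b * u2 + c * u3 + d * u4)
        + (S - S⁻¹) * (a * T * (u1 * (S * T)) + b * T * (u2 * (-T / S))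
            - (c / T) * (u3 * (-S / T)) - (d / T) * (u4 * (S * T)⁻¹))
        + (T - T⁻¹) * (a * T * u1 + b * T * u2 - (c / T) * u3 - (d / T) * u4) := by
    intro u1 u2 u3 u4
    linear_combination (a*u1)*r1a + (b*u2)*r1b + (c*u3)*r1c + (d*u4)*r1d
  have id2' : ∀ u1 u2 u3 u4 : ℂ,
      a * T * (u1 * (S * T) ^ 2) + b * T * (u2 * (-T / S) ^ 2) - (c / T) * (u3 * (-S / T) ^ 2)
        - (d / T) * (u4 * ((S * T)⁻¹) ^ 2)
      = (a * T * u1 + b * T * u2 - (c / T) * u3 - (d / T) * u4)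
        + (T - T⁻¹) * (a * (u1 * (S * T) ^ 2) + b * (u2 * (-T / S) ^ 2)
            + c * (u3 * (-S / T) ^ 2) + d * (u4 * ((S * T)⁻¹) ^ 2))
        + (S - S⁻¹) * (a * (u1 * (S * T)) + b * (u2 * (-T / S)) + c * (u3 * (-S / T))
            + d * (u4 * (S * T)⁻¹)) := by
    intro u1 u2 u3 u4
    linear_combination (a*u1)*r2a + (b*u2)*r2b + (c*u3)*r2c + (d*u4)*r2d
  have id1 : ∀ n, F1 S T a b c d (n + 2) = F1 S T a b c d n
      + (S - S⁻¹) * F2 S T a b c d (n + 1) + (T - T⁻¹) * F2 S T a b c d n := by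
    intro n
    simp only [F1, F2, pow_add, pow_one]
    exact id1' _ _ _ _
  have id2 : ∀ n, F2 S T a b c d (n + 2) = F2 S T a b c d n
      + (T - T⁻¹) * F1 S T a b c d (n + 2) + (S - S⁻¹) * F1 S T a b c d (n + 1) := by
    intro n
    simp only [F1, F2, pow_add, pow_one]
    exact id2' _ _ _ _
  have H : ∀ n, (g1 n = F1 S T a b c d n ∧ g2 n = F2 S T a b c d n) ∧
      (g1 (n + 1) = F1 S T a b c d (n + 1) ∧ g2 (n + 1) = F2 S T a b c d (n + 1)) := by
    intro n
    induction n with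
    | zero => exact ⟨⟨h10, h20⟩, ⟨h11, h21⟩⟩
    | succ k ih =>
      obtain ⟨⟨e1, e2⟩, e3, e4⟩ := ih
      have f1 : g1 (k + 2) = F1 S T a b c d (k + 2) := by
        rw [hrec1 k, e1, e2, e4]; exact (id1 k).symm
      have f2 : g2 (k + 2) = F2 S T a b c d (k + 2) := by
        rw [hrec2 k, e2, e3, f1]; exact (id2 k).symm
      exact ⟨⟨e3, e4⟩, f1, f2⟩
  exact fun n => (H n).1

private lemma F_exists (S T : ℂ) (hS : S ≠ 0) (hT : T ≠ 0)
    (hS2 : S ^ 2 + 1 ≠ 0) (hT2 : T ^ 2 + 1 ≠ 0) (x0 x1 y0 y1 : ℂ) :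
    ∃ a b c d : ℂ, x0 = F1 S T a b c d 0 ∧ x1 = F1 S T a b c d 1 ∧
      y0 = F2 S T a b c d 0 ∧ y1 = F2 S T a b c d 1 := by
  obtain ⟨A, B, eAB1, eAB2⟩ : ∃ A B : ℂ, x0 = A + B ∧ y0 = A * T - B / T := by
    refine ⟨(x0 + T * y0) / (T ^ 2 + 1), x0 - (x0 + T * y0) / (T ^ 2 + 1), by ring, ?_⟩
    field_simp
    ring
  obtain ⟨P, Q, eP1, eP2⟩ : ∃ P Q : ℂ, x1 = P * T + Q / T ∧ y1 = P * T ^ 2 - Q / T ^ 2 := by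
    refine ⟨(x1 + T * y1) / (T * (T ^ 2 + 1)),
      T * (x1 - T * ((x1 + T * y1) / (T * (T ^ 2 + 1)))), ?_, ?_⟩ <;>
    · field_simp
      ring
  obtain ⟨a, b, ea1, ea2⟩ : ∃ a b : ℂ, A = a + b ∧ P = a * S - b / S := by
    refine ⟨(A + S * P) / (S ^ 2 + 1), A - (A + S * P) / (S ^ 2 + 1), by ring, ?_⟩
    field_simp
    ring
  obtain ⟨c, d, ec1, ec2⟩ : ∃ c d : ℂ, B = c + d ∧ Q = -S * c + d / S := by
    refine ⟨B - S * (Q + S * B) / (S ^ 2 + 1), S * (Q + S * B) / (S ^ 2 + 1), by ring, ?_⟩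
    field_simp
    ring
  refine ⟨a, b, c, d, ?_, ?_, ?_, ?_⟩ <;>
      simp only [F1, F2, pow_zero, pow_one, mul_one]
  · linear_combination eAB1 + ea1 + ec1
  · linear_combination eP1 + T * ea2 + T⁻¹ * ec2
  · linear_combination eAB2 + T * ea1 - T⁻¹ * ec1
  · linear_combination eP2 + T ^ 2 * ea2 - (T ^ 2)⁻¹ * ec2

private lemma mul_self_lt_one {x : ℝ} (h0 : 0 ≤ x) (h1 : x < 1) : x * x < 1 := by nlinarith

private lemma mul_self_sq_lt_one {x : ℝ} (h0 : 0 ≤ x) (h1 : x < 1) : (x * x) ^ 2 < 1 := by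
  nlinarith [mul_self_lt_one h0 h1, mul_nonneg h0 h0]

set_option maxHeartbeats 1000000 in
set_option maxRecDepth 8000 in
/-- Any solution `(g₁, g₂) : ℕ → ℂ` of the recurrence system which vanishes at infinity
is a linear combination of the first three fundamental solutions; moreover `b = 0` if
`q_s < q_t`, and `c = 0` if `q_s > q_t`. -/
theorem solutions_vanishing_at_infinity (qs qt : ℝ)
    (hqs : 0 < qs ∧ qs ≤ 1) (hqt : 0 < qt ∧ qt ≤ 1)
    (g1 g2 : ℕ → ℂ)
    (hrec1 : ∀ n : ℕ, g1 (n + 2) =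
      g1 n + (((qs - 1) / Real.sqrt qs : ℝ) : ℂ) * g2 (n + 1)
        + (((qt - 1) / Real.sqrt qt : ℝ) : ℂ) * g2 n)
    (hrec2 : ∀ n : ℕ, g2 (n + 2) =
      g2 n + (((qt - 1) / Real.sqrt qt : ℝ) : ℂ) * g1 (n + 2)
        + (((qs - 1) / Real.sqrt qs : ℝ) : ℂ) * g1 (n + 1))
    (hlim1 : Tendsto g1 atTop (nhds 0)) (hlim2 : Tendsto g2 atTop (nhds 0)) :
    ∃ a b c : ℂ,
      (∀ n : ℕ, g1 n =
        a * ((qs ^ ((n : ℝ) / 2) * qt ^ ((n : ℝ) / 2) : ℝ) : ℂ)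
        + b * (-1) ^ n * ((qs ^ (-(n : ℝ) / 2) * qt ^ ((n : ℝ) / 2) : ℝ) : ℂ)
        + c * (-1) ^ n * ((qs ^ ((n : ℝ) / 2) * qt ^ (-(n : ℝ) / 2) : ℝ) : ℂ)) ∧
      (∀ n : ℕ, g2 n =
        a * ((qs ^ ((n : ℝ) / 2) * qt ^ (((n : ℝ) + 1) / 2) : ℝ) : ℂ)
        + b * (-1) ^ n * ((qs ^ (-(n : ℝ) / 2) * qt ^ (((n : ℝ) + 1) / 2) : ℝ) : ℂ)
        + c * (-1) ^ (n + 1) * ((qs ^ ((n : ℝ) / 2) * qt ^ (-((n : ℝ) + 1) / 2) : ℝ) : ℂ)) ∧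
      (qs < qt → b = 0) ∧ (qt < qs → c = 0) := by
  obtain ⟨hqs0, hqs1⟩ := hqs
  obtain ⟨hqt0, hqt1⟩ := hqt
  set s : ℝ := Real.sqrt qs with hs_def
  set t : ℝ := Real.sqrt qt with ht_def
  have hs0 : 0 < s := Real.sqrt_pos.mpr hqs0
  have ht0 : 0 < t := Real.sqrt_pos.mpr hqt0
  have hsq : s ^ 2 = qs := Real.sq_sqrt hqs0.le
  have htq : t ^ 2 = qt := Real.sq_sqrt hqt0.le
  have hs1 : s ≤ 1 := by nlinarith
  have ht1 : t ≤ 1 := by nlinarith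
  have hS : (s : ℂ) ≠ 0 := by exact_mod_cast hs0.ne'
  have hT : (t : ℂ) ≠ 0 := by exact_mod_cast ht0.ne'
  have hST : (s : ℂ) * (t : ℂ) ≠ 0 := mul_ne_zero hS hT
  have hS2 : (s : ℂ) ^ 2 + 1 ≠ 0 := by
    intro h0
    have h1 : ((s ^ 2 + 1 : ℝ) : ℂ) = 0 := by push_cast; linear_combination h0
    have h2 : (s ^ 2 + 1 : ℝ) = 0 := by exact_mod_cast h1
    nlinarith
  have hT2 : (t : ℂ) ^ 2 + 1 ≠ 0 := by
    intro h0
    have h1 : ((t ^ 2 + 1 : ℝ) : ℂ) = 0 := by push_cast; linear_combination h0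
    have h2 : (t ^ 2 + 1 : ℝ) = 0 := by exact_mod_cast h1
    nlinarith
  have hps : (((qs - 1) / s : ℝ) : ℂ) = (s : ℂ) - ((s : ℂ))⁻¹ := by
    have hr : (qs - 1) / s = s - s⁻¹ := by rw [← hsq]; field_simp
    rw [hr]; push_cast; ring
  have hpt : (((qt - 1) / t : ℝ) : ℂ) = (t : ℂ) - ((t : ℂ))⁻¹ := by
    have hr : (qt - 1) / t = t - t⁻¹ := by rw [← htq]; field_simp
    rw [hr]; push_cast; ring
  have hrec1' : ∀ n, g1 (n + 2) = g1 n + ((s : ℂ) - ((s : ℂ))⁻¹) * g2 (n + 1)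
      + ((t : ℂ) - ((t : ℂ))⁻¹) * g2 n := by
    intro n; rw [hrec1 n, hps, hpt]
  have hrec2' : ∀ n, g2 (n + 2) = g2 n + ((t : ℂ) - ((t : ℂ))⁻¹) * g1 (n + 2)
      + ((s : ℂ) - ((s : ℂ))⁻¹) * g1 (n + 1) := by
    intro n; rw [hrec2 n, hps, hpt]
  obtain ⟨a, b, c, d, h10, h11, h20, h21⟩ :=
    F_exists (s : ℂ) (t : ℂ) hS hT hS2 hT2 (g1 0) (g1 1) (g2 0) (g2 1)
  have key := F_unique (s : ℂ) (t : ℂ) hS hT g1 g2 hrec1' hrec2' a b c d h10 h11 h20 h21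
  have hnS : ‖((s : ℝ) : ℂ)‖ = s := by rw [Complex.norm_real]; exact abs_of_pos hs0
  have hnT : ‖((t : ℝ) : ℂ)‖ = t := by rw [Complex.norm_real]; exact abs_of_pos ht0
  have c41 : (((s : ℂ) * (t : ℂ))⁻¹) * ((s : ℂ) * (t : ℂ)) = 1 := inv_mul_cancel₀ hST
  have c23 : (-(t : ℂ) / (s : ℂ)) * (-(s : ℂ) / (t : ℂ)) = 1 := by field_simp
  have c32 : (-(s : ℂ) / (t : ℂ)) * (-(t : ℂ) / (s : ℂ)) = 1 := by field_simp
  have ptw : ∀ (z : ℂ) (n : ℕ), g1 n * z ^ n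
      = a * (((s : ℂ) * (t : ℂ)) * z) ^ n + b * ((-(t : ℂ) / (s : ℂ)) * z) ^ n
        + c * ((-(s : ℂ) / (t : ℂ)) * z) ^ n + d * ((((s : ℂ) * (t : ℂ))⁻¹) * z) ^ n := by
    intro z n
    rw [(key n).1]
    simp only [F1]
    rw [add_mul, add_mul, add_mul, mul_assoc, mul_assoc, mul_assoc, mul_assoc,
      ← mul_pow, ← mul_pow, ← mul_pow, ← mul_pow]
  have hzST : ‖(s : ℂ) * (t : ℂ)‖ ≤ 1 := by rw [norm_mul, hnS, hnT]; nlinarith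
  have hue : Tendsto (fun n => g1 (2 * n) * ((s : ℂ) * (t : ℂ)) ^ (2 * n)) atTop (nhds 0) := by
    have h := (aux_mul_pow hlim1 hzST).comp aux_even
    simpa [Function.comp_def] using h
  have huo : Tendsto (fun n => g1 (2 * n + 1) * ((s : ℂ) * (t : ℂ)) ^ (2 * n + 1))
      atTop (nhds 0) := by
    have h := (aux_mul_pow hlim1 hzST).comp aux_odd
    simpa [Function.comp_def] using h
  -- d = 0
  have hd : d = 0 := by
    rcases lt_or_eq_of_le hs1 with hsl | hse
    · rcases lt_or_eq_of_le ht1 with htl | hte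
      · -- s < 1, t < 1
        have hst1 : s * t < 1 := by nlinarith
        refine extract4 (u := fun n => g1 n * ((s : ℂ) * (t : ℂ)) ^ n)
          (aux_mul_pow hlim1 hzST) a b c d
          (((s : ℂ) * (t : ℂ)) * ((s : ℂ) * (t : ℂ)))
          ((-(t : ℂ) / (s : ℂ)) * ((s : ℂ) * (t : ℂ)))
          ((-(s : ℂ) / (t : ℂ)) * ((s : ℂ) * (t : ℂ))) ?_ ?_ ?_ ?_
        · simp only [norm_mul, hnS, hnT]
          exact mul_self_lt_one (by positivity) hst1
        · simp only [norm_mul, norm_div, norm_neg, hnS, hnT]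
          rw [show t / s * (s * t) = t * t from by field_simp]
          exact mul_self_lt_one ht0.le htl
        · simp only [norm_mul, norm_div, norm_neg, hnS, hnT]
          rw [show s / t * (s * t) = s * s from by field_simp]
          exact mul_self_lt_one hs0.le hsl
        · intro n
          show g1 n * _ = _
          rw [ptw ((s : ℂ) * (t : ℂ)) n, c41, one_pow, mul_one]
      · -- s < 1, t = 1
        have hst1 : s * t < 1 := by nlinarith
        have hTe : (t : ℂ) = 1 := by rw [hte]; norm_num
        have cb : (-(t : ℂ) / (s : ℂ)) * ((s : ℂ) * (t : ℂ)) = -1 := by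
          rw [hTe]; field_simp
        have he : b + d = 0 := by
          refine extract3 (u := fun n => g1 (2 * n) * ((s : ℂ) * (t : ℂ)) ^ (2 * n))
            hue (a) (c) (b + d)
            ((((s : ℂ) * (t : ℂ)) * ((s : ℂ) * (t : ℂ))) ^ 2)
            (((-(s : ℂ) / (t : ℂ)) * ((s : ℂ) * (t : ℂ))) ^ 2) ?_ ?_ ?_
          · simp only [norm_pow, norm_mul, hnS, hnT]
            exact mul_self_sq_lt_one (by positivity) hst1
          · simp only [norm_pow, norm_mul, norm_div, norm_neg, hnS, hnT]
            rw [show s / t * (s * t) = s * s from by field_simp]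
            exact mul_self_sq_lt_one hs0.le hsl
          · intro n
            show g1 (2 * n) * _ = _
            rw [ptw ((s : ℂ) * (t : ℂ)) (2 * n), cb, c41, pow_mul, pow_mul, pow_mul, pow_mul]
            simp only [neg_one_sq, one_pow]
            ring
        have ho : d - b = 0 := by
          refine extract3 (u := fun n => g1 (2 * n + 1) * ((s : ℂ) * (t : ℂ)) ^ (2 * n + 1))
            huo (a * (((s : ℂ) * (t : ℂ)) * ((s : ℂ) * (t : ℂ))))
            (c * ((-(s : ℂ) / (t : ℂ)) * ((s : ℂ) * (t : ℂ)))) (d - b)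
            ((((s : ℂ) * (t : ℂ)) * ((s : ℂ) * (t : ℂ))) ^ 2)
            (((-(s : ℂ) / (t : ℂ)) * ((s : ℂ) * (t : ℂ))) ^ 2) ?_ ?_ ?_
          · simp only [norm_pow, norm_mul, hnS, hnT]
            exact mul_self_sq_lt_one (by positivity) hst1
          · simp only [norm_pow, norm_mul, norm_div, norm_neg, hnS, hnT]
            rw [show s / t * (s * t) = s * s from by field_simp]
            exact mul_self_sq_lt_one hs0.le hsl
          · intro n
            show g1 (2 * n + 1) * _ = _
            rw [ptw ((s : ℂ) * (t : ℂ)) (2 * n + 1), cb, c41]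
            simp only [pow_succ, pow_mul, neg_one_sq, one_pow, mul_one]
            ring
        linear_combination (1 / 2 : ℂ) * he + (1 / 2 : ℂ) * ho
    · rcases lt_or_eq_of_le ht1 with htl | hte
      · -- s = 1, t < 1
        have hst1 : s * t < 1 := by nlinarith
        have hSe : (s : ℂ) = 1 := by rw [hse]; norm_num
        have cc : (-(s : ℂ) / (t : ℂ)) * ((s : ℂ) * (t : ℂ)) = -1 := by
          rw [hSe]; field_simp
        have he : c + d = 0 := by
          refine extract3 (u := fun n => g1 (2 * n) * ((s : ℂ) * (t : ℂ)) ^ (2 * n))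
            hue (a) (b) (c + d)
            ((((s : ℂ) * (t : ℂ)) * ((s : ℂ) * (t : ℂ))) ^ 2)
            (((-(t : ℂ) / (s : ℂ)) * ((s : ℂ) * (t : ℂ))) ^ 2) ?_ ?_ ?_
          · simp only [norm_pow, norm_mul, hnS, hnT]
            exact mul_self_sq_lt_one (by positivity) hst1
          · simp only [norm_pow, norm_mul, norm_div, norm_neg, hnS, hnT]
            rw [show t / s * (s * t) = t * t from by field_simp]
            exact mul_self_sq_lt_one ht0.le htl
          · intro n
            show g1 (2 * n) * _ = _
            rw [ptw ((s : ℂ) * (t : ℂ)) (2 * n), cc, c41, pow_mul, pow_mul, pow_mul, pow_mul]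
            simp only [neg_one_sq, one_pow]
            ring
        have ho : d - c = 0 := by
          refine extract3 (u := fun n => g1 (2 * n + 1) * ((s : ℂ) * (t : ℂ)) ^ (2 * n + 1))
            huo (a * (((s : ℂ) * (t : ℂ)) * ((s : ℂ) * (t : ℂ))))
            (b * ((-(t : ℂ) / (s : ℂ)) * ((s : ℂ) * (t : ℂ)))) (d - c)
            ((((s : ℂ) * (t : ℂ)) * ((s : ℂ) * (t : ℂ))) ^ 2)
            (((-(t : ℂ) / (s : ℂ)) * ((s : ℂ) * (t : ℂ))) ^ 2) ?_ ?_ ?_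
          · simp only [norm_pow, norm_mul, hnS, hnT]
            exact mul_self_sq_lt_one (by positivity) hst1
          · simp only [norm_pow, norm_mul, norm_div, norm_neg, hnS, hnT]
            rw [show t / s * (s * t) = t * t from by field_simp]
            exact mul_self_sq_lt_one ht0.le htl
          · intro n
            show g1 (2 * n + 1) * _ = _
            rw [ptw ((s : ℂ) * (t : ℂ)) (2 * n + 1), cc, c41]
            simp only [pow_succ, pow_mul, neg_one_sq, one_pow, mul_one]
            ring
        linear_combination (1 / 2 : ℂ) * he + (1 / 2 : ℂ) * ho
      · -- s = 1, t = 1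
        have hSe : (s : ℂ) = 1 := by rw [hse]; norm_num
        have hTe : (t : ℂ) = 1 := by rw [hte]; norm_num
        have t1e : Tendsto (fun n => g1 (2 * n)) atTop (nhds 0) := by
          simpa [Function.comp_def] using hlim1.comp aux_even
        have t1o : Tendsto (fun n => g1 (2 * n + 1)) atTop (nhds 0) := by
          simpa [Function.comp_def] using hlim1.comp aux_odd
        have t2e : Tendsto (fun n => g2 (2 * n)) atTop (nhds 0) := by
          simpa [Function.comp_def] using hlim2.comp aux_even
        have t2o : Tendsto (fun n => g2 (2 * n + 1)) atTop (nhds 0) := by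
          simpa [Function.comp_def] using hlim2.comp aux_odd
        have e1 : a + b + c + d = 0 := by
          refine extract3 (u := fun n => g1 (2 * n)) t1e
            0 0 (a + b + c + d) 0 0 (by norm_num) (by norm_num) ?_
          intro n
          show g1 (2 * n) = _
          rw [(key (2 * n)).1]
          simp only [F1, hSe, hTe, mul_one, one_mul, div_one, inv_one, one_pow, pow_mul,
            neg_one_sq, neg_div]
          ring
        have e2 : a - b - c + d = 0 := by
          refine extract3 (u := fun n => g1 (2 * n + 1)) t1o
            0 0 (a - b - c + d) 0 0 (by norm_num) (by norm_num) ?_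
          intro n
          show g1 (2 * n + 1) = _
          rw [(key (2 * n + 1)).1]
          simp only [F1, hSe, hTe, mul_one, one_mul, div_one, inv_one, one_pow, pow_succ,
            pow_mul, neg_one_sq, neg_div]
          ring
        have e3 : a + b - c - d = 0 := by
          refine extract3 (u := fun n => g2 (2 * n)) t2e
            0 0 (a + b - c - d) 0 0 (by norm_num) (by norm_num) ?_
          intro n
          show g2 (2 * n) = _
          rw [(key (2 * n)).2]
          simp only [F2, hSe, hTe, mul_one, one_mul, div_one, inv_one, one_pow, pow_mul,
            neg_one_sq, neg_div]
          ring
        have e4 : a - b + c - d = 0 := by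
          refine extract3 (u := fun n => g2 (2 * n + 1)) t2o
            0 0 (a - b + c - d) 0 0 (by norm_num) (by norm_num) ?_
          intro n
          show g2 (2 * n + 1) = _
          rw [(key (2 * n + 1)).2]
          simp only [F2, hSe, hTe, mul_one, one_mul, div_one, inv_one, one_pow, pow_succ,
            pow_mul, neg_one_sq, neg_div]
          ring
        linear_combination (1 / 4 : ℂ) * e1 + (1 / 4 : ℂ) * e2 - (1 / 4 : ℂ) * e3
          - (1 / 4 : ℂ) * e4
  have key1 : ∀ n, g1 n = a * ((s : ℂ) * (t : ℂ)) ^ n + b * (-(t : ℂ) / (s : ℂ)) ^ n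
      + c * (-(s : ℂ) / (t : ℂ)) ^ n := by
    intro n; rw [(key n).1]; simp only [F1, hd]; ring
  have key2 : ∀ n, g2 n = a * (t : ℂ) * ((s : ℂ) * (t : ℂ)) ^ n
      + b * (t : ℂ) * (-(t : ℂ) / (s : ℂ)) ^ n - (c / (t : ℂ)) * (-(s : ℂ) / (t : ℂ)) ^ n := by
    intro n; rw [(key n).2]; simp only [F2, hd]; ring
  have ptw1 : ∀ (z : ℂ) (n : ℕ), g1 n * z ^ n
      = a * (((s : ℂ) * (t : ℂ)) * z) ^ n + b * ((-(t : ℂ) / (s : ℂ)) * z) ^ n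
        + c * ((-(s : ℂ) / (t : ℂ)) * z) ^ n := by
    intro z n
    rw [key1 n]
    rw [add_mul, add_mul, mul_assoc, mul_assoc, mul_assoc, ← mul_pow, ← mul_pow, ← mul_pow]
  have hb : s < t → b = 0 := by
    intro hst
    have hsl : s < 1 := lt_of_lt_of_le hst ht1
    have hz : ‖-(s : ℂ) / (t : ℂ)‖ ≤ 1 := by
      rw [norm_div, norm_neg, hnS, hnT, div_le_one ht0]; exact hst.le
    refine extract3 (u := fun n => g1 n * (-(s : ℂ) / (t : ℂ)) ^ n)
      (aux_mul_pow hlim1 hz) a c b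
      (((s : ℂ) * (t : ℂ)) * (-(s : ℂ) / (t : ℂ)))
      ((-(s : ℂ) / (t : ℂ)) * (-(s : ℂ) / (t : ℂ))) ?_ ?_ ?_
    · simp only [norm_mul, norm_div, norm_neg, hnS, hnT]
      rw [show s * t * (s / t) = s * s from by field_simp]
      exact mul_self_lt_one hs0.le hsl
    · simp only [norm_mul, norm_div, norm_neg, hnS, hnT]
      exact mul_self_lt_one (by positivity) ((div_lt_one ht0).mpr hst)
    · intro n
      show g1 n * _ = _
      rw [ptw1 (-(s : ℂ) / (t : ℂ)) n, c23, one_pow, mul_one]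
      try ring
  have hc : t < s → c = 0 := by
    intro hts
    have htl : t < 1 := lt_of_lt_of_le hts hs1
    have hz : ‖-(t : ℂ) / (s : ℂ)‖ ≤ 1 := by
      rw [norm_div, norm_neg, hnS, hnT, div_le_one hs0]; exact hts.le
    refine extract3 (u := fun n => g1 n * (-(t : ℂ) / (s : ℂ)) ^ n)
      (aux_mul_pow hlim1 hz) a b c
      (((s : ℂ) * (t : ℂ)) * (-(t : ℂ) / (s : ℂ)))
      ((-(t : ℂ) / (s : ℂ)) * (-(t : ℂ) / (s : ℂ))) ?_ ?_ ?_
    · simp only [norm_mul, norm_div, norm_neg, hnS, hnT]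
      rw [show s * t * (t / s) = t * t from by field_simp]
      exact mul_self_lt_one ht0.le htl
    · simp only [norm_mul, norm_div, norm_neg, hnS, hnT]
      exact mul_self_lt_one (by positivity) ((div_lt_one hs0).mpr hts)
    · intro n
      show g1 n * _ = _
      rw [ptw1 (-(t : ℂ) / (s : ℂ)) n, c32, one_pow, mul_one]
      try ring
  have hrpow : ∀ x : ℝ, 0 < x → ∀ n : ℕ, x ^ ((n : ℝ) / 2) = (Real.sqrt x) ^ n := by
    intro x hx n
    rw [Real.sqrt_eq_rpow, show ((n : ℝ) / 2) = (1 / 2 : ℝ) * (n : ℝ) by ring,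
      Real.rpow_mul hx.le, Real.rpow_natCast]
  have hrpowneg : ∀ x : ℝ, 0 < x → ∀ n : ℕ, x ^ (-(n : ℝ) / 2) = ((Real.sqrt x)⁻¹) ^ n := by
    intro x hx n
    rw [show (-(n : ℝ) / 2) = -((n : ℝ) / 2) by ring, Real.rpow_neg hx.le, hrpow x hx n,
      inv_pow]
  refine ⟨a, b, c, ?_, ?_, fun h => hb (by rw [hs_def, ht_def]; exact Real.sqrt_lt_sqrt hqs0.le h),
    fun h => hc (by rw [hs_def, ht_def]; exact Real.sqrt_lt_sqrt hqt0.le h)⟩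
  · intro n
    rw [key1 n, hrpow qs hqs0 n, hrpow qt hqt0 n, hrpowneg qs hqs0 n, hrpowneg qt hqt0 n,
      ← hs_def, ← ht_def]
    push_cast
    simp only [show (-(t : ℂ)) = -1 * (t : ℂ) from by ring,
      show (-(s : ℂ)) = -1 * (s : ℂ) from by ring, div_pow, mul_pow, inv_pow]
    ring
  · intro n
    rw [key2 n, show (((n : ℝ) + 1) / 2) = (((n + 1 : ℕ) : ℝ) / 2) by push_cast; ring,
      show (-((n : ℝ) + 1) / 2) = (-((n + 1 : ℕ) : ℝ) / 2) by push_cast; ring,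
      hrpow qs hqs0 n, hrpow qt hqt0 (n + 1), hrpowneg qs hqs0 n, hrpowneg qt hqt0 (n + 1),
      ← hs_def, ← ht_def]
    push_cast
    simp only [show (-(t : ℂ)) = -1 * (t : ℂ) from by ring,
      show (-(s : ℂ)) = -1 * (s : ℂ) from by ring, pow_succ, div_pow, mul_pow, inv_pow]
    ring
end

section
/- Let (W,S) be a right-angled Coxeter system, q : S → (0,1], ε : S → {-1,1}, and let η_ε be the formal series with coefficients (η_ε)_w = q_{w,ε}^{1/2}. If w ∈ W and s ∈ S satisfy |sws| = |w| + 2, then (η_ε)_{sws} = (η_ε)_w + p_s (η_ε)_{ws} and (η_ε)_{sw} = (η_ε)_{ws}, where p_s = (q_s-1)/√q_s. -/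
/-- Let `(W,S)` be a right-angled Coxeter system, `q : S → (0,1]`, `ε : S → {-1,1}`, and let
`η` be the formal series with coefficients `η_w = q_{w,ε}^{1/2}` (with the sign convention
`x^{1/2} = sgn(x)|x|^{1/2}`, so that `η_w = ∏ᵢ ε_{sᵢ} q_{sᵢ}^{ε_{sᵢ}/2}` along any reduced
expression `w = s₁⋯sₙ`).  If `w ∈ W` and `s ∈ S` satisfy `|sws| = |w| + 2`, then
`η_{sws} = η_w + p_s η_{ws}` and `η_{sw} = η_{ws}`, where `p_s = (q_s - 1)/√q_s`. -/
theorem eigenvector_coefficients_adding_letters {S : Type*} {W : Type*} [Group W]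
    (M : CoxeterMatrix S) (cs : CoxeterSystem M W)
    (hra : ∀ s t : S, s ≠ t → M s t = 2 ∨ M s t = 0)
    (q : S → ℝ) (hq : ∀ s, 0 < q s ∧ q s ≤ 1)
    (ε : S → ℝ) (hε : ∀ s, ε s = 1 ∨ ε s = -1)
    (η : W → ℝ)
    (hη : ∀ l : List S, cs.IsReduced l →
      η (cs.wordProd l) = (l.map (fun v => ε v * q v ^ (ε v / 2))).prod)
    (w : W) (s : S)
    (h : cs.length (cs.simple s * w * cs.simple s) = cs.length w + 2) :
    η (cs.simple s * w * cs.simple s)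
        = η w + (q s - 1) / Real.sqrt (q s) * η (w * cs.simple s) ∧
      η (cs.simple s * w) = η (w * cs.simple s) := by
  obtain ⟨l, hl, rfl⟩ := cs.exists_reduced_word' w
  -- lengths of the pieces
  have hws : cs.length (cs.wordProd l * cs.simple s) = cs.length (cs.wordProd l) + 1 := by
    rcases cs.length_mul_simple (cs.wordProd l) s with h1 | h1
    · exact h1
    · exfalso
      rcases cs.length_simple_mul (cs.wordProd l * cs.simple s) s with h2 | h2 <;>
        · rw [← mul_assoc] at h2; omega
  have hsw : cs.length (cs.simple s * cs.wordProd l) = cs.length (cs.wordProd l) + 1 := by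
    rcases cs.length_simple_mul (cs.wordProd l) s with h1 | h1
    · exact h1
    · exfalso
      rcases cs.length_mul_simple (cs.simple s * cs.wordProd l) s with h2 | h2 <;> omega
  -- reducedness of the extended words
  have hl' : cs.length (cs.wordProd l) = l.length := hl
  have hred1 : cs.IsReduced (s :: (l ++ [s])) := by
    unfold CoxeterSystem.IsReduced
    rw [cs.wordProd_cons, cs.wordProd_append, cs.wordProd_cons, cs.wordProd_nil, mul_one,
      ← mul_assoc]
    simp only [List.length_cons, List.length_append, List.length_nil]
    omega
  have hred2 : cs.IsReduced (s :: l) := by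
    unfold CoxeterSystem.IsReduced
    rw [cs.wordProd_cons]
    simp only [List.length_cons]
    omega
  have hred3 : cs.IsReduced (l ++ [s]) := by
    unfold CoxeterSystem.IsReduced
    rw [cs.wordProd_append, cs.wordProd_cons, cs.wordProd_nil, mul_one]
    simp only [List.length_cons, List.length_append, List.length_nil]
    omega
  have e1 := hη (s :: (l ++ [s])) hred1
  have e2 := hη (s :: l) hred2
  have e3 := hη (l ++ [s]) hred3
  have e0 := hη l hl
  rw [cs.wordProd_cons, cs.wordProd_append, cs.wordProd_cons, cs.wordProd_nil, mul_one,
    ← mul_assoc] at e1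
  rw [cs.wordProd_cons] at e2
  rw [cs.wordProd_append, cs.wordProd_cons, cs.wordProd_nil, mul_one] at e3
  simp only [List.map_cons, List.map_append, List.map_cons, List.map_nil, List.prod_cons,
    List.prod_append, List.prod_cons, List.prod_nil, mul_one] at e1 e2 e3
  set f : ℝ := ε s * q s ^ (ε s / 2) with hf
  set P : ℝ := (l.map (fun v => ε v * q v ^ (ε v / 2))).prod with hP
  rw [← e0] at e1 e2 e3
  have hqs := (hq s).1
  have hsq : Real.sqrt (q s) = q s ^ ((1:ℝ)/2) := Real.sqrt_eq_rpow (q s)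
  have key : f * (η (cs.wordProd l) * f)
      = η (cs.wordProd l) + (q s - 1) / Real.sqrt (q s) * (η (cs.wordProd l) * f) := by
    have hsqpos : (0:ℝ) < Real.sqrt (q s) := Real.sqrt_pos.mpr hqs
    have hff : f * f = q s ^ (ε s) := by
      rw [hf]
      rcases hε s with he | he <;>
        · rw [he]
          rw [show ((1:ℝ)/2 : ℝ) = 1/2 by norm_num] at *
          nlinarith [Real.rpow_natCast (q s) 1,
            Real.rpow_add hqs ((1:ℝ)/2) ((1:ℝ)/2),
            Real.rpow_add hqs (-(1:ℝ)/2) (-(1:ℝ)/2),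
            Real.rpow_add hqs ((1:ℝ)/2) (-(1:ℝ)/2), Real.rpow_zero (q s),
            Real.rpow_one (q s)]
    have hfs : (q s - 1) / Real.sqrt (q s) * f = q s ^ (ε s) - 1 := by
      have hq0 : Real.sqrt (q s) * Real.sqrt (q s) = q s := Real.mul_self_sqrt hqs.le
      rcases hε s with he | he
      · rw [hf, he, one_mul, Real.rpow_one, ← hsq]
        field_simp
      · have hneg : q s ^ ((-1:ℝ) / 2) = (Real.sqrt (q s))⁻¹ := by
          rw [hsq, ← Real.rpow_neg hqs.le]; norm_num
        rw [hf, he, hneg, Real.rpow_neg hqs.le, Real.rpow_one]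
        field_simp
        rw [Real.sq_sqrt hqs.le]; ring
    calc f * (η (cs.wordProd l) * f) = (f * f) * η (cs.wordProd l) := by ring
      _ = η (cs.wordProd l) + (q s ^ (ε s) - 1) * η (cs.wordProd l) := by
          rw [hff]; ring
      _ = _ := by rw [← hfs]; ring
  constructor
  · rw [e1, e3, key]
  · rw [e2, e3]; ring
end

section
/- Let (W,S) be a right-angled Coxeter system, q : S → (0,1] with multiparameter Hecke algebra ℂ_q[W] acting on ℓ²(W) via T_s δ_w = δ_{sw} if |sw| > |w| and T_s δ_w = δ_{sw} + p_s δ_w if |sw| < |w| (p_s = (q_s-1)/√q_s). For ε : S → {-1,1} with Σ_w |q_{w,ε}|^{1/2} < ∞, the vector η_ε = Σ_w q_{w,ε}^{1/2} δ_w ∈ ℓ²(W) satisfies T_s η_ε = ε_s q_s^{ε_s/2} η_ε for every s ∈ S. -/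
/-- For a right-angled Coxeter system `(W,S)`, `q : S → (0,1]` and a sign `ε : S → {-1,1}`
with `∑_w |q_{w,ε}|^{1/2} < ∞`, the vector `η_ε = ∑_w q_{w,ε}^{1/2} δ_w` lies in `ℓ²(W)` and
satisfies `T_s^{(q)} η_ε = ε_s q_s^{ε_s/2} η_ε` for every `s ∈ S`; here the Hecke operator
acts coefficientwise by `(T_s ξ)_w = ξ_{sw}` if `|sw| > |w|` and
`(T_s ξ)_w = ξ_{sw} + p_s ξ_w` if `|sw| < |w|`, with `p_s = (q_s-1)/√q_s`. -/
theorem hecke_eigenvector_in_ell_two {S : Type*} {W : Type*} [Group W]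
    (M : CoxeterMatrix S) (cs : CoxeterSystem M W)
    (hra : ∀ s t : S, s ≠ t → M s t = 2 ∨ M s t = 0)
    (q : S → ℝ) (hq : ∀ s, 0 < q s ∧ q s ≤ 1)
    (ε : S → ℝ) (hε : ∀ s, ε s = 1 ∨ ε s = -1)
    (η : W → ℝ)
    (hη : ∀ l : List S, cs.IsReduced l →
      η (cs.wordProd l) = (l.map (fun v => ε v * q v ^ (ε v / 2))).prod)
    (hsum : Summable (fun w : W => |η w|)) :
    Memℓp η 2 ∧
      ∀ (s : S) (w : W),
        (if cs.length (cs.simple s * w) > cs.length w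
          then η (cs.simple s * w)
          else η (cs.simple s * w) + (q s - 1) / Real.sqrt (q s) * η w)
        = ε s * q s ^ (ε s / 2) * η w := by
  set lam : S → ℝ := fun s => ε s * q s ^ (ε s / 2) with hlam
  -- the key recursion: if length increases, η multiplies by lam
  have key : ∀ (s : S) (w : W), cs.length (cs.simple s * w) > cs.length w →
      η (cs.simple s * w) = lam s * η w := by
    intro s w hgt
    obtain ⟨l, hl, rfl⟩ := cs.exists_reduced_word' w
    have hred : cs.IsReduced (s :: l) := by
      unfold CoxeterSystem.IsReduced at hl ⊢
      rw [cs.wordProd_cons]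
      rcases cs.length_simple_mul (cs.wordProd l) s with h | h
      · simp [h, hl]
      · omega
    have := hη (s :: l) hred
    rw [cs.wordProd_cons] at this
    rw [this, hη l hl]
    simp [lam]
  -- quadratic relation: lam s ^ 2 = 1 + p s * lam s
  have quad : ∀ s : S, lam s * lam s = 1 + (q s - 1) / Real.sqrt (q s) * lam s := by
    intro s
    have hq0 : 0 < q s := (hq s).1
    have hsq : Real.sqrt (q s) = q s ^ ((1:ℝ)/2) := Real.sqrt_eq_rpow (q s)
    have hne : q s ^ ((1:ℝ)/2) ≠ 0 := by positivity
    have hinv : (q s ^ ((1:ℝ)/2))⁻¹ = q s ^ ((-1:ℝ)/2) := by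
      rw [← Real.rpow_neg hq0.le]; norm_num
    have h1 : q s ^ ((1:ℝ)/2) * q s ^ ((1:ℝ)/2) = q s := by
      rw [← Real.rpow_add hq0]; norm_num
    have h2 : q s ^ ((-1:ℝ)/2) * q s ^ ((1:ℝ)/2) = 1 := by
      rw [← Real.rpow_add hq0]; norm_num
    have h3 : q s ^ ((-1:ℝ)/2) * q s ^ ((-1:ℝ)/2) = (q s)⁻¹ := by
      rw [← Real.rpow_add hq0]; norm_num
      rw [Real.rpow_neg hq0.le, Real.rpow_one]
    have hinvq : q s * (q s)⁻¹ = 1 := mul_inv_cancel₀ hq0.ne'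
    have hp : (q s - 1) / Real.sqrt (q s) = (q s - 1) * q s ^ ((-1:ℝ)/2) := by
      rw [hsq, div_eq_mul_inv, hinv]
    have hl : lam s = ε s * q s ^ (ε s / 2) := rfl
    rcases hε s with h | h
    · rw [hl, h, hp]
      linear_combination h1 - (q s - 1) * h2
    · rw [hl, h, hp]
      linear_combination q s * h3 + hinvq
  have lam_ne : ∀ s, lam s ≠ 0 := by
    intro s
    have hq0 : 0 < q s := (hq s).1
    have : (0:ℝ) < q s ^ (ε s / 2) := Real.rpow_pos_of_pos hq0 _
    rcases hε s with h | h <;> simp [lam, h] <;> positivity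
  constructor
  · have h1 : Memℓp η 1 := by
      apply memℓp_gen
      simpa [Real.norm_eq_abs] using hsum
    exact h1.of_exponent_ge (by norm_num)
  · intro s w
    rcases (cs.length_simple_mul w s).symm with h | h
    · -- length decreases
      have hlt : ¬ cs.length (cs.simple s * w) > cs.length w := by omega
      rw [if_neg hlt]
      -- w = s * (s*w), with length increasing
      have hw : cs.simple s * (cs.simple s * w) = w := by
        rw [← mul_assoc, cs.simple_mul_simple_self, one_mul]
      have hgt2 : cs.length (cs.simple s * (cs.simple s * w)) > cs.length (cs.simple s * w) := by
        rw [hw]; omega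
      have hv := key s (cs.simple s * w) hgt2
      rw [hw] at hv
      rw [hv]
      linear_combination (-η (cs.simple s * w)) * quad s
    · rw [if_pos (by omega)]
      exact key s w (by omega)
end

section
/- Let (W,S) be a right-angled Coxeter system with Hecke operators T_s^{(q)} on ℓ^r(W), r ∈ [1,∞). Fix s ∈ S and ξ ∈ ℓ^r(W). Then T_s^{(q)} ξ = ξ T_s^{(q)} (ξ is central for T_s^{(q)}) if and only if for all w ∈ W with |sws| = |w| + 2 one has ξ_{sw} = ξ_{ws} and ξ_{sws} = ξ_w + p_s ξ_{sw}, where p_s = (q_s-1)/√q_s. -/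
namespace CfhgAux

attribute [local instance] Classical.propDecidable

variable {G : Type*} [Group G]

noncomputable def flipPair (a : G) : G × ℤˣ → G × ℤˣ :=
  fun p => (a * p.1 * a, if p.1 = a then -p.2 else p.2)

lemma conj_cancel (a : G) (ha : a * a = 1) (x : G) : a * (a * x * a) * a = x := by
  calc a * (a * x * a) * a = (a * a) * x * (a * a) := by group
    _ = x := by rw [ha]; simp

lemma conj_iff {a v : G} (ha : a * a = 1) (hv : a * v * a = v) (x : G) :
    a * x * a = v ↔ x = v := by
  constructor
  · intro h
    have h2 : a * (a * x * a) * a = a * v * a := by rw [h]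
    rwa [conj_cancel a ha, hv] at h2
  · rintro rfl; exact hv

lemma flipPair_involutive (a : G) (ha : a * a = 1) : Function.Involutive (flipPair a) := by
  intro p
  obtain ⟨t, ε⟩ := p
  have hv : a * a * a = a := by rw [ha, one_mul]
  simp only [flipPair, conj_cancel a ha, conj_iff ha hv]
  by_cases ht : t = a <;> simp [ht]

lemma flipPair_comm (a b : G) (ha : a * a = 1) (hb : b * b = 1)
    (habab : (a * b) * (a * b) = 1) (p : G × ℤˣ) :
    flipPair a (flipPair b (flipPair a (flipPair b p))) = p := by
  obtain ⟨t, ε⟩ := p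
  have hainv : a⁻¹ = a := inv_eq_of_mul_eq_one_right ha
  have hbinv : b⁻¹ = b := inv_eq_of_mul_eq_one_right hb
  have hcomm : a * b = b * a := by
    have h1 : a * b = (a * b)⁻¹ := eq_inv_of_mul_eq_one_left habab
    rwa [mul_inv_rev, hainv, hbinv] at h1
  have hbaba : (b * a) * (b * a) = 1 := by rw [← hcomm]; exact habab
  have hbab : b * a * b = a := by rw [← hcomm, mul_assoc, hb, mul_one]
  have haba : a * b * a = b := by rw [hcomm, mul_assoc, ha, mul_one]
  have haaa : a * a * a = a := by rw [ha, one_mul]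
  have hbbb : b * b * b = b := by rw [hb, one_mul]
  have hfirst : a * (b * (a * (b * t * b) * a) * b) * a = t := by
    calc a * (b * (a * (b * t * b) * a) * b) * a
        = ((a * b) * (a * b)) * t * ((b * a) * (b * a)) := by group
      _ = t := by rw [habab, hbaba, one_mul, mul_one]
  simp only [flipPair, hfirst, conj_iff hb hbab, conj_iff ha haba, conj_iff ha haaa,
    conj_iff hb hbbb]
  by_cases ht1 : t = a <;> by_cases ht2 : t = b <;>
    simp [ht1, ht2, hbab, haba, haaa, hbbb, conj_iff hb hbab, conj_iff ha haba,
      conj_iff ha haaa, conj_iff hb hbbb]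
  · have hab : a = b := ht1.symm.trans ht2
    simp [hab]
  · have hab : ¬(a = b) := fun h => ht2 (ht1.trans h)
    simp [hab]
  · have hab : ¬(b = a) := fun h => ht1 (ht2.trans h)
    simp [hab]

section Cox

open CoxeterSystem List

variable {B : Type*} {W : Type*} [Group W] {M : CoxeterMatrix B} (cs : CoxeterSystem M W)

/-- The flip permutation attached to a simple reflection. -/
noncomputable def flip (i : B) : Equiv.Perm (W × ℤˣ) :=
  Function.Involutive.toPerm (flipPair (cs.simple i))
    (flipPair_involutive _ (cs.simple_mul_simple_self i))

@[simp] lemma flip_apply (i : B) (p : W × ℤˣ) : flip cs i p = flipPair (cs.simple i) p := rfl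

lemma flip_liftable (hra : ∀ i j : B, i ≠ j → M i j = 2 ∨ M i j = 0) :
    M.IsLiftable (fun i => flip cs i) := by
  intro i j
  by_cases hij : i = j
  · subst hij
    rw [M.diagonal, pow_one]
    apply Equiv.ext
    intro p
    rw [Equiv.Perm.mul_apply, Equiv.Perm.one_apply]
    exact flipPair_involutive _ (cs.simple_mul_simple_self i) p
  · rcases hra i j hij with h2 | h0
    · rw [h2]
      have habab : (cs.simple i * cs.simple j) * (cs.simple i * cs.simple j) = 1 := by
        have := cs.simple_mul_simple_pow i j
        rwa [h2, pow_two] at this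
      apply Equiv.ext
      intro p
      simp only [pow_two, Equiv.Perm.mul_apply, Equiv.Perm.one_apply, flip_apply]
      exact flipPair_comm _ _ (cs.simple_mul_simple_self i) (cs.simple_mul_simple_self j)
        habab p
    · rw [h0, pow_zero]

variable (hra : ∀ i j : B, i ≠ j → M i j = 2 ∨ M i j = 0)

/-- The sign representation of the Coxeter group. -/
noncomputable def rho : W →* Equiv.Perm (W × ℤˣ) :=
  cs.lift ⟨fun i => flip cs i, flip_liftable cs hra⟩

lemma rho_simple (i : B) : rho cs hra (cs.simple i) = flip cs i :=
  cs.lift_apply_simple (flip_liftable cs hra) i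

/-- Product of `-1`s over the entries of `l` equal to `t`. -/
noncomputable def signProd (l : List W) (t : W) : ℤˣ :=
  (l.map fun u => if u = t then -1 else 1).prod

@[simp] lemma signProd_nil (t : W) : signProd ([] : List W) t = 1 := rfl

lemma signProd_cons (x : W) (l : List W) (t : W) :
    signProd (x :: l) t = (if x = t then -1 else 1) * signProd l t := by
  simp [signProd]

lemma signProd_of_nodup (l : List W) (t : W) (h : l.Nodup) :
    signProd l t = if t ∈ l then -1 else 1 := by
  induction l with
  | nil => simp
  | cons x l ih =>
    rw [List.nodup_cons] at h
    rw [signProd_cons, ih h.2]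
    by_cases hx : x = t
    · subst hx
      simp [h.1]
    · simp [hx, Ne.symm hx]

lemma rho_wordProd (ω : List B) (t : W) (ε : ℤˣ) :
    rho cs hra (cs.wordProd ω) (t, ε) =
      (cs.wordProd ω * t * (cs.wordProd ω)⁻¹, signProd (cs.rightInvSeq ω) t * ε) := by
  induction ω with
  | nil => simp [cs.wordProd_nil]
  | cons i ω ih =>
    rw [cs.wordProd_cons, map_mul, Equiv.Perm.mul_apply, ih, rho_simple, flip_apply]
    have hris : cs.rightInvSeq (i :: ω) =
        ((cs.wordProd ω)⁻¹ * cs.simple i * cs.wordProd ω) :: cs.rightInvSeq ω := rfl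
    rw [hris, signProd_cons]
    simp only [flipPair]
    have hcond : (cs.wordProd ω * t * (cs.wordProd ω)⁻¹ = cs.simple i)
        ↔ ((cs.wordProd ω)⁻¹ * cs.simple i * cs.wordProd ω = t) := by
      constructor
      · intro h; rw [← h]; group
      · intro h; rw [← h]; group
    have hfirst : cs.simple i * (cs.wordProd ω * t * (cs.wordProd ω)⁻¹) * cs.simple i
        = cs.simple i * cs.wordProd ω * t * (cs.simple i * cs.wordProd ω)⁻¹ := by
      rw [mul_inv_rev, cs.inv_simple]; group
    rw [Prod.mk.injEq]
    refine ⟨hfirst, ?_⟩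
    by_cases hc : (cs.wordProd ω)⁻¹ * cs.simple i * cs.wordProd ω = t
    · rw [if_pos (hcond.mpr hc), if_pos hc, neg_mul, one_mul, neg_mul]
    · rw [if_neg (fun h => hc (hcond.mp h)), if_neg hc, one_mul]


lemma signProd_ris_eq (hra : ∀ i j : B, i ≠ j → M i j = 2 ∨ M i j = 0) (ω ω' : List B) (h : cs.wordProd ω = cs.wordProd ω') (t : W) :
    signProd (cs.rightInvSeq ω) t = signProd (cs.rightInvSeq ω') t := by
  have h1 := rho_wordProd cs hra ω t 1
  have h2 := rho_wordProd cs hra ω' t 1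
  rw [h] at h1
  have h3 := congrArg Prod.snd (h1.symm.trans h2)
  simpa using h3

lemma mem_ris_iff (ω : List B) (hred : cs.IsReduced ω) (t : W) :
    t ∈ cs.rightInvSeq ω ↔ signProd (cs.rightInvSeq ω) t = -1 := by
  rw [signProd_of_nodup _ _ (CoxeterSystem.IsReduced.nodup_rightInvSeq cs hred)]
  by_cases hm : t ∈ cs.rightInvSeq ω
  · simp [hm]
  · simp only [hm, if_false, iff_false]
    decide

lemma exchange_mem (hra : ∀ i j : B, i ≠ j → M i j = 2 ∨ M i j = 0) {w : W} {i : B} (hw : cs.length (w * cs.simple i) < cs.length w)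
    {ω : List B} (hred : cs.IsReduced ω) (hπ : cs.wordProd ω = w) :
    cs.simple i ∈ cs.rightInvSeq ω := by
  obtain ⟨κ, hκlen, hκ⟩ := cs.exists_reduced_word (w * cs.simple i)
  replace hκlen : κ.length = cs.length (w * cs.simple i) := by
    rw [hκ]; exact (hκlen : cs.length (cs.wordProd κ) = κ.length).symm
  have hlen' : cs.length (w * cs.simple i) + 1 = cs.length w :=
    (cs.length_mul_simple w i).resolve_left (by omega)
  have hπ' : cs.wordProd (κ ++ [i]) = w := by
    rw [cs.wordProd_append, cs.wordProd_singleton, ← hκ, cs.simple_mul_simple_cancel_right]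
  have hred' : cs.IsReduced (κ ++ [i]) := by
    show cs.length (cs.wordProd (κ ++ [i])) = (κ ++ [i]).length
    rw [hπ']
    simp only [List.length_append, List.length_singleton, hκlen]
    omega
  have hmem' : cs.simple i ∈ cs.rightInvSeq (κ ++ [i]) := by
    rw [← List.concat_eq_append, cs.rightInvSeq_concat]
    simp
  rw [mem_ris_iff cs _ hred'] at hmem'
  rw [mem_ris_iff cs _ hred, signProd_ris_eq cs hra ω (κ ++ [i]) (by rw [hπ, hπ'])]
  exact hmem'

lemma exchange (hra : ∀ i j : B, i ≠ j → M i j = 2 ∨ M i j = 0) {w : W} {i : B} (hw : cs.length (w * cs.simple i) < cs.length w)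
    {ω : List B} (hred : cs.IsReduced ω) (hπ : cs.wordProd ω = w) :
    ∃ j < ω.length, w * cs.simple i = cs.wordProd (ω.eraseIdx j) := by
  have hmem := exchange_mem cs hra hw hred hπ
  obtain ⟨j, hj, hval⟩ := List.mem_iff_getElem.mp hmem
  rw [cs.length_rightInvSeq] at hj
  refine ⟨j, hj, ?_⟩
  have hgd : (cs.rightInvSeq ω).getD j 1 = cs.simple i := by
    rw [List.getD_eq_getElem _ _ (by rwa [cs.length_rightInvSeq]), hval]
  rw [← hπ, ← hgd]
  exact cs.wordProd_mul_getD_rightInvSeq ω j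

lemma key (hra : ∀ i j : B, i ≠ j → M i j = 2 ∨ M i j = 0) (i : B) (w : W) (h1 : cs.length (cs.simple i * w) = cs.length w + 1)
    (h2 : cs.length (w * cs.simple i) = cs.length w + 1)
    (h3 : cs.length (cs.simple i * w * cs.simple i) ≠ cs.length w + 2) :
    cs.simple i * w = w * cs.simple i := by
  have hle : cs.length (cs.simple i * w * cs.simple i) ≤ cs.length (cs.simple i * w) + 1 := by
    have := cs.length_mul_le (cs.simple i * w) (cs.simple i)
    simpa [cs.length_simple] using this
  have hsws : cs.length (cs.simple i * w * cs.simple i) + 1 = cs.length (cs.simple i * w) :=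
    (cs.length_mul_simple (cs.simple i * w) i).resolve_left (by omega)
  obtain ⟨ω, hωlen, hωeq⟩ := cs.exists_reduced_word w
  replace hωlen : ω.length = cs.length w := by
    rw [hωeq]; exact (hωlen : cs.length (cs.wordProd ω) = ω.length).symm
  have hred : cs.IsReduced (i :: ω) := by
    show cs.length (cs.wordProd (i :: ω)) = (i :: ω).length
    rw [cs.wordProd_cons, ← hωeq]
    simp [h1, hωlen]
  have hπ : cs.wordProd (i :: ω) = cs.simple i * w := by rw [cs.wordProd_cons, ← hωeq]
  have hlt : cs.length (cs.simple i * w * cs.simple i) < cs.length (cs.simple i * w) := by omega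
  obtain ⟨j, hj, hval⟩ := exchange cs hra hlt hred hπ
  cases j with
  | zero =>
    have h0 : (i :: ω).eraseIdx 0 = ω := rfl
    rw [h0, ← hωeq] at hval
    calc cs.simple i * w = (cs.simple i * w * cs.simple i) * cs.simple i :=
          (cs.simple_mul_simple_cancel_right i).symm
      _ = w * cs.simple i := by rw [hval]
  | succ k =>
    exfalso
    have he : (i :: ω).eraseIdx (k + 1) = i :: ω.eraseIdx k := rfl
    rw [he, cs.wordProd_cons] at hval
    have hcancel : cs.simple i * (cs.simple i * w * cs.simple i) = w * cs.simple i := by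
      calc cs.simple i * (cs.simple i * w * cs.simple i)
          = (cs.simple i * cs.simple i) * (w * cs.simple i) := by group
        _ = w * cs.simple i := by rw [cs.simple_mul_simple_self]; simp
    have hws : w * cs.simple i = cs.wordProd (ω.eraseIdx k) := by
      rw [← hcancel, hval, cs.simple_mul_simple_cancel_left]
    have hlen2 : cs.length (w * cs.simple i) ≤ (ω.eraseIdx k).length := by
      rw [hws]; exact cs.length_wordProd_le _
    have hjk : k < ω.length := by simpa using hj
    have hek : (ω.eraseIdx k).length = ω.length - 1 := by
      rw [List.length_eraseIdx]; simp [hjk]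
    omega


end Cox

end CfhgAux

/-- Centrality for a single Hecke generator: for `ξ ∈ ℓ^r(W)`, `T_s^{(q)} ξ = ξ T_s^{(q)}`
if and only if, for every `w ∈ W` with `|sws| = |w| + 2`, one has `ξ_{sw} = ξ_{ws}` and
`ξ_{sws} = ξ_w + p_s ξ_{sw}`.  The left action has coefficients
`(T_s ξ)_w = ξ_{sw}` if `|sw| > |w|` and `ξ_{sw} + p_s ξ_w` otherwise; the right action has
coefficients `(ξ T_s)_w = ξ_{ws}` if `|ws| > |w|` and `ξ_{ws} + p_s ξ_w` otherwise. -/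
theorem central_for_hecke_generator_iff {S : Type*} {W : Type*} [Group W]
    (M : CoxeterMatrix S) (cs : CoxeterSystem M W)
    (hra : ∀ s t : S, s ≠ t → M s t = 2 ∨ M s t = 0)
    (q : S → ℝ) (hq : ∀ s, 0 < q s ∧ q s ≤ 1)
    (r : ℝ) (hr : 1 ≤ r)
    (s : S) (ξ : W → ℝ) (hξ : Memℓp ξ (ENNReal.ofReal r)) :
    (∀ w : W,
      (if cs.length (cs.simple s * w) > cs.length w
        then ξ (cs.simple s * w)
        else ξ (cs.simple s * w) + (q s - 1) / Real.sqrt (q s) * ξ w)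
      =
      (if cs.length (w * cs.simple s) > cs.length w
        then ξ (w * cs.simple s)
        else ξ (w * cs.simple s) + (q s - 1) / Real.sqrt (q s) * ξ w))
    ↔
    (∀ w : W, cs.length (cs.simple s * w * cs.simple s) = cs.length w + 2 →
      ξ (cs.simple s * w) = ξ (w * cs.simple s) ∧
      ξ (cs.simple s * w * cs.simple s)
        = ξ w + (q s - 1) / Real.sqrt (q s) * ξ (cs.simple s * w)) := by
  constructor
  · intro H w h2
    have hle1 : cs.length (cs.simple s * w * cs.simple s) ≤ cs.length (cs.simple s * w) + 1 := by
      have := cs.length_mul_le (cs.simple s * w) (cs.simple s)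
      simpa [cs.length_simple] using this
    have hle2 : cs.length (cs.simple s * w * cs.simple s) ≤ cs.length (w * cs.simple s) + 1 := by
      have h := cs.length_mul_le (cs.simple s) (w * cs.simple s)
      rw [show cs.simple s * (w * cs.simple s) = cs.simple s * w * cs.simple s from
        (mul_assoc _ _ _).symm] at h
      rw [cs.length_simple] at h; omega
    have hsw : cs.length (cs.simple s * w) = cs.length w + 1 := by
      rcases cs.length_simple_mul w s with h | h
      · exact h
      · omega
    have hws : cs.length (w * cs.simple s) = cs.length w + 1 := by
      rcases cs.length_mul_simple w s with h | h
      · exact h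
      · omega
    constructor
    · have H1 := H w
      rw [if_pos (by omega), if_pos (by omega)] at H1
      exact H1
    · have H2 := H (cs.simple s * w)
      rw [cs.simple_mul_simple_cancel_left] at H2
      rw [if_neg (by omega), if_pos (by omega)] at H2
      exact H2.symm
  · intro K w
    rcases cs.length_simple_mul w s with hsw | hsw <;>
      rcases cs.length_mul_simple w s with hws | hws
    · -- both ascents
      rw [if_pos (by omega), if_pos (by omega)]
      rcases cs.length_mul_simple (cs.simple s * w) s with h | h
      · exact (K w (by omega)).1
      · have hkey := CfhgAux.key cs hra s w hsw hws (by omega)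
        rw [hkey]
    · -- left ascent, right descent
      rw [if_pos (by omega), if_neg (by omega)]
      have e1 : cs.simple s * (w * cs.simple s) * cs.simple s = cs.simple s * w := by
        rw [← mul_assoc]
        exact cs.simple_mul_simple_cancel_right s
      have harg : cs.length (cs.simple s * (w * cs.simple s) * cs.simple s)
          = cs.length (w * cs.simple s) + 2 := by rw [e1]; omega
      obtain ⟨k1, k2⟩ := K (w * cs.simple s) harg
      rw [cs.simple_mul_simple_cancel_right] at k1
      rw [e1, k1] at k2
      exact k2
    · -- left descent, right ascent
      rw [if_neg (by omega), if_pos (by omega)]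
      have harg : cs.length (cs.simple s * (cs.simple s * w) * cs.simple s)
          = cs.length (cs.simple s * w) + 2 := by
        rw [cs.simple_mul_simple_cancel_left]; omega
      obtain ⟨k1, k2⟩ := K (cs.simple s * w) harg
      rw [cs.simple_mul_simple_cancel_left] at k2
      exact k2.symm
    · -- both descents
      rw [if_neg (by omega), if_neg (by omega)]
      have hkey : ξ (cs.simple s * w) = ξ (w * cs.simple s) := by
        rcases cs.length_mul_simple (cs.simple s * w) s with h | h
        · have h1' : cs.length (cs.simple s * (cs.simple s * w))
              = cs.length (cs.simple s * w) + 1 := by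
            rw [cs.simple_mul_simple_cancel_left]; omega
          have h2' : cs.length ((cs.simple s * w) * cs.simple s)
              = cs.length (cs.simple s * w) + 1 := h
          have h3' : cs.length (cs.simple s * (cs.simple s * w) * cs.simple s)
              ≠ cs.length (cs.simple s * w) + 2 := by
            rw [cs.simple_mul_simple_cancel_left]; omega
          have hk := CfhgAux.key cs hra s (cs.simple s * w) h1' h2' h3'
          rw [cs.simple_mul_simple_cancel_left] at hk
          have h6 : cs.simple s * w = w * cs.simple s := by
            nth_rw 2 [hk]
            exact (cs.simple_mul_simple_cancel_right s).symm
          rw [h6]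
        · have e : cs.simple s * (cs.simple s * w * cs.simple s) * cs.simple s = w := by
            calc cs.simple s * (cs.simple s * w * cs.simple s) * cs.simple s
                = (cs.simple s * cs.simple s) * w * (cs.simple s * cs.simple s) := by group
              _ = w := by rw [cs.simple_mul_simple_self]; simp
          have harg : cs.length (cs.simple s * (cs.simple s * w * cs.simple s) * cs.simple s)
              = cs.length (cs.simple s * w * cs.simple s) + 2 := by rw [e]; omega
          obtain ⟨k1, k2⟩ := K (cs.simple s * w * cs.simple s) harg
          have e2 : cs.simple s * (cs.simple s * w * cs.simple s) = w * cs.simple s := by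
            calc cs.simple s * (cs.simple s * w * cs.simple s)
                = (cs.simple s * cs.simple s) * (w * cs.simple s) := by group
              _ = w * cs.simple s := by rw [cs.simple_mul_simple_self]; simp
          rw [e2, cs.simple_mul_simple_cancel_right] at k1
          exact k1.symm
      rw [hkey]
end

section
/- Let (W,S) be a right-angled Coxeter system with Hecke operators T_s^{(q)} on ℓ^r(W), r ∈ [1,∞), q : S → (0,1]. Fix ε : S → {-1,1}. Suppose c : {-1,1}^S → ℂ are coefficients with Σ_{ε'} c_{ε'} η_{ε'} ∈ ℓ^r(W) (as a convergent series of formal Hecke eigenvector series). If c_ε ≠ 0, then η_ε ∈ ℓ^r(W), i.e. Σ_w |q_{w,ε}|^{r/2} < ∞. -/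
noncomputable section EigenAux

variable {S : Type*} {W : Type*} [Group W]

/-- The (normalized) eigenvalue of the Hecke operator. -/
def lamAux (q : S → ℝ) (b : Bool) (s : S) : ℝ :=
  (if b then (1 : ℝ) else -1) * q s ^ ((if b then (1 : ℝ) else -1) / 2)

/-- The shifted Hecke operator `T_s^{(q)} - μ`. -/
def hopAux {M : CoxeterMatrix S} (cs : CoxeterSystem M W) (q : S → ℝ) (μ : ℝ) (s : S)
    (f : W → ℝ) : W → ℝ :=
  fun w => f (w * cs.simple s) +
    ((if cs.length (w * cs.simple s) < cs.length w
        then q s ^ ((1 : ℝ) / 2) - q s ^ ((-1 : ℝ) / 2) else 0) - μ) * f w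

theorem lamAux_mul (q : S → ℝ) (s : S) (hq0 : 0 < q s) :
    q s ^ ((1 : ℝ) / 2) * q s ^ ((-1 : ℝ) / 2) = 1 := by
  rw [← Real.rpow_add hq0]
  norm_num

theorem stepAux {M : CoxeterMatrix S} (cs : CoxeterSystem M W) (q : S → ℝ)
    (g : W → ℝ) (e : S → Bool)
    (hg : ∀ l : List S, cs.IsReduced l →
      g (cs.wordProd l) = (l.map (fun v => lamAux q (e v) v)).prod)
    (w : W) (s : S) (h : cs.length (w * cs.simple s) = cs.length w + 1) :
    g (w * cs.simple s) = g w * lamAux q (e s) s := by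
  obtain ⟨l, hl, rfl⟩ := cs.exists_reduced_word' w
  have hred : cs.IsReduced (l ++ [s]) := by
    unfold CoxeterSystem.IsReduced at hl ⊢
    rw [cs.wordProd_append, cs.wordProd_singleton, h, hl]
    simp
  have h1 := hg l hl
  have h2 := hg (l ++ [s]) hred
  rw [cs.wordProd_append, cs.wordProd_singleton] at h2
  rw [h2, h1, List.map_append, List.prod_append]
  simp

theorem hopAux_eig {M : CoxeterMatrix S} (cs : CoxeterSystem M W) (q : S → ℝ)
    (s : S) (hq0 : 0 < q s) (g : W → ℝ) (b : Bool) (μ : ℝ)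
    (hstep : ∀ w, cs.length (w * cs.simple s) = cs.length w + 1 →
      g (w * cs.simple s) = g w * lamAux q b s) :
    hopAux cs q μ s g = fun w => (lamAux q b s - μ) * g w := by
  funext w
  have hab := lamAux_mul q s hq0
  rcases cs.length_mul_simple w s with h | h
  · have hlt : ¬ cs.length (w * cs.simple s) < cs.length w := by omega
    rw [hopAux, if_neg hlt, hstep w h]
    ring
  · have hlt : cs.length (w * cs.simple s) < cs.length w := by omega
    have hw : (w * cs.simple s) * cs.simple s = w := by
      rw [mul_assoc, cs.simple_mul_simple_self, mul_one]
    have h2 : cs.length ((w * cs.simple s) * cs.simple s) =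
        cs.length (w * cs.simple s) + 1 := by rw [hw]; omega
    have h3 := hstep (w * cs.simple s) h2
    rw [hw] at h3
    rw [hopAux, if_pos hlt, h3]
    cases b <;>
      simp only [lamAux, Bool.false_eq_true, if_true, if_false] <;>
      linear_combination (-(g (w * cs.simple s))) * hab

theorem lamAux_sub_ne_zero (q : S → ℝ) (s : S) (hq0 : 0 < q s) (b : Bool) :
    lamAux q b s - lamAux q (!b) s ≠ 0 := by
  have h1 : 0 < q s ^ ((1 : ℝ) / 2) := Real.rpow_pos_of_pos hq0 _
  have h2 : 0 < q s ^ ((-1 : ℝ) / 2) := Real.rpow_pos_of_pos hq0 _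
  cases b <;> simp only [lamAux, Bool.not_false, Bool.not_true, Bool.false_eq_true,
    if_true, if_false] <;> nlinarith

theorem hopAux_mem {M : CoxeterMatrix S} (cs : CoxeterSystem M W) (q : S → ℝ) (μ : ℝ) (s : S)
    {p : ENNReal} (hp : 0 < p.toReal) {f : W → ℝ} (hf : Memℓp f p) :
    Memℓp (hopAux cs q μ s f) p := by
  have h1 : Memℓp (fun w => f (w * cs.simple s)) p := by
    rw [memℓp_gen_iff hp]
    have h2 : Summable ((fun w => ‖f w‖ ^ p.toReal) ∘ (Equiv.mulRight (cs.simple s))) :=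
      (Equiv.mulRight (cs.simple s)).summable_iff.2 (hf.summable hp)
    exact h2
  have h2 : Memℓp (fun w =>
      ((if cs.length (w * cs.simple s) < cs.length w
          then q s ^ ((1 : ℝ) / 2) - q s ^ ((-1 : ℝ) / 2) else 0) - μ) * f w) p := by
    set C := |q s ^ ((1 : ℝ) / 2) - q s ^ ((-1 : ℝ) / 2)| + |μ| with hCdef
    have hC : 0 ≤ C := by positivity
    apply memℓp_gen
    apply Summable.of_nonneg_of_le (fun w => Real.rpow_nonneg (norm_nonneg _) _)
      (fun w => ?_) ((hf.summable hp).mul_left (C ^ p.toReal))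
    have hb : ‖((if cs.length (w * cs.simple s) < cs.length w
          then q s ^ ((1 : ℝ) / 2) - q s ^ ((-1 : ℝ) / 2) else 0) - μ) * f w‖ ≤ C * ‖f w‖ := by
      rw [norm_mul]
      apply mul_le_mul_of_nonneg_right _ (norm_nonneg _)
      calc ‖(if cs.length (w * cs.simple s) < cs.length w
          then q s ^ ((1 : ℝ) / 2) - q s ^ ((-1 : ℝ) / 2) else 0) - μ‖
          ≤ ‖(if cs.length (w * cs.simple s) < cs.length w
          then q s ^ ((1 : ℝ) / 2) - q s ^ ((-1 : ℝ) / 2) else 0)‖ + ‖μ‖ := norm_sub_le _ _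
        _ ≤ C := by
            rw [hCdef]
            gcongr
            split <;> simp [abs_nonneg, le_abs_self, le_refl]
            exact (Real.norm_eq_abs μ).le
    exact le_trans (Real.rpow_le_rpow (norm_nonneg _) hb hp.le)
      (le_of_eq (Real.mul_rpow hC (norm_nonneg _)))
  exact h1.add h2

theorem hopAux_sum {M : CoxeterMatrix S} [Fintype S] [DecidableEq S] (cs : CoxeterSystem M W) (q : S → ℝ)
    (μ : ℝ) (s : S) (g : (S → Bool) → ℝ) (η : (S → Bool) → W → ℝ) :
    hopAux cs q μ s (fun w => ∑ e : S → Bool, g e * η e w) =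
      fun w => ∑ e : S → Bool, g e * hopAux cs q μ s (η e) w := by
  funext w
  simp only [hopAux, Finset.mul_sum, ← Finset.sum_add_distrib]
  refine Finset.sum_congr rfl fun e _ => by ring

end EigenAux


/-- If a (finite) linear combination `∑_{ε'} c_{ε'} η_{ε'}` of the formal Hecke eigenvector
series lies in `ℓ^r(W)` and `c_ε ≠ 0`, then `η_ε ∈ ℓ^r(W)`.  Signs are encoded by
`Bool`, with `true ↦ 1` and `false ↦ -1`, and `η_e (w) = ∏ᵢ εᵢ q_{sᵢ}^{εᵢ/2}` along a reduced
expression of `w`. -/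
theorem eigenvector_component_in_ell_r {S : Type*} [Fintype S] [DecidableEq S]
    {W : Type*} [Group W]
    (M : CoxeterMatrix S) (cs : CoxeterSystem M W)
    (hra : ∀ s t : S, s ≠ t → M s t = 2 ∨ M s t = 0)
    (q : S → ℝ) (hq : ∀ s, 0 < q s ∧ q s ≤ 1)
    (r : ℝ) (hr : 1 ≤ r)
    (η : (S → Bool) → W → ℝ)
    (hη : ∀ (e : S → Bool) (l : List S), cs.IsReduced l →
      η e (cs.wordProd l) =
        (l.map (fun v => (if e v then (1 : ℝ) else -1)
          * q v ^ ((if e v then (1 : ℝ) else -1) / 2))).prod)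
    (c : (S → Bool) → ℝ)
    (hmem : Memℓp (fun w : W => ∑ e : S → Bool, c e * η e w) (ENNReal.ofReal r))
    (ε : S → Bool) (hc : c ε ≠ 0) :
    Memℓp (η ε) (ENNReal.ofReal r) := by
  have hp : 0 < (ENNReal.ofReal r).toReal := by
    rw [ENNReal.toReal_ofReal (by linarith)]; linarith
  -- the step property of each η e
  have hstep : ∀ (e : S → Bool) (w : W) (s : S),
      cs.length (w * cs.simple s) = cs.length w + 1 →
      η e (w * cs.simple s) = η e w * lamAux q (e s) s := by
    intro e w s h
    exact stepAux cs q (η e) e (fun l hl => hη e l hl) w s h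
  -- per-generator eigen identity
  have heig : ∀ (e : S → Bool) (s : S) (μ : ℝ),
      hopAux cs q μ s (η e) = fun w => (lamAux q (e s) s - μ) * η e w := by
    intro e s μ
    exact hopAux_eig cs q s (hq s).1 (η e) (e s) μ (fun w => hstep e w s)
  -- main induction over a list of generators
  have main : ∀ L : List S,
      Memℓp (fun w : W => ∑ e : S → Bool,
        (c e * (L.map (fun s => lamAux q (e s) s - lamAux q (!ε s) s)).prod) * η e w)
        (ENNReal.ofReal r) := by
    intro L
    induction L with
    | nil => simpa using hmem
    | cons s L ih =>
      have h' := hopAux_mem cs q (lamAux q (!ε s) s) s hp ih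
      have heq : hopAux cs q (lamAux q (!ε s) s) s
          (fun w : W => ∑ e : S → Bool,
            (c e * (L.map (fun s => lamAux q (e s) s - lamAux q (!ε s) s)).prod) * η e w) =
          fun w : W => ∑ e : S → Bool,
            (c e * ((s :: L).map (fun s => lamAux q (e s) s - lamAux q (!ε s) s)).prod)
              * η e w := by
        rw [hopAux_sum]
        funext w
        refine Finset.sum_congr rfl fun e _ => ?_
        rw [heig e s (lamAux q (!ε s) s)]
        simp only [List.map_cons, List.prod_cons]
        ring
      rwa [heq] at h'
  have hfin := main (Finset.univ : Finset S).toList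
  set K := (((Finset.univ : Finset S).toList).map
    (fun s => lamAux q (ε s) s - lamAux q (!ε s) s)).prod with hK
  have hfun : (fun w : W => ∑ e : S → Bool,
      (c e * (((Finset.univ : Finset S).toList).map
        (fun s => lamAux q (e s) s - lamAux q (!ε s) s)).prod) * η e w) =
      fun w => (c ε * K) * η ε w := by
    funext w
    rw [Finset.sum_eq_single ε]
    · intro e _ hne
      obtain ⟨s, hs⟩ := Function.ne_iff.1 hne
      have hes : e s = !ε s := by
        cases h1 : e s <;> cases h2 : ε s <;> simp_all
      have hzero : lamAux q (e s) s - lamAux q (!ε s) s = 0 := by rw [hes]; ring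
      have hmem0 : (0 : ℝ) ∈ ((Finset.univ : Finset S).toList).map
          (fun s => lamAux q (e s) s - lamAux q (!ε s) s) :=
        List.mem_map.2 ⟨s, by simp, hzero⟩
      rw [List.prod_eq_zero hmem0]
      ring
    · intro h; exact absurd (Finset.mem_univ ε) h
  rw [hfun] at hfin
  have hKne : K ≠ 0 := by
    rw [hK]
    apply List.prod_ne_zero
    intro h0
    obtain ⟨s, -, hs⟩ := List.mem_map.1 h0
    exact lamAux_sub_ne_zero q s (hq s).1 (ε s) hs
  have hcK : c ε * K ≠ 0 := mul_ne_zero hc hKne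
  have := hfin.const_mul (c ε * K)⁻¹
  have heq2 : (fun w => (c ε * K)⁻¹ * ((c ε * K) * η ε w)) = η ε := by
    funext w
    rw [← mul_assoc, inv_mul_cancel₀ hcK, one_mul]
  rwa [heq2] at this
end

section
/- Let (W,S) be a right-angled Coxeter system, q : S → (0,1], r ∈ [1,∞). The set of left Hecke eigenvectors in ℓ^r(W) (nonzero ξ with T_s^{(q)} ξ ∈ ℂξ for all s ∈ S) is exactly the set of nonzero scalar multiples of the vectors η_ε = Σ_w q_{w,ε}^{1/2} δ_w, where ε ranges over {−1,1}^S with Σ_w |q_{w,ε}|^{r/2} < ∞. In particular, a Hecke eigenvector exists in ℓ^r(W) if and only if Σ_w q_w^{r/2} < ∞. -/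
section HeckeAux

variable {S : Type*} {W : Type*} [Group W] {M : CoxeterMatrix S} (cs : CoxeterSystem M W)

private lemma hecke_isReduced_cons {s : S} {l : List S} (hl : cs.IsReduced l)
    (h : cs.length (cs.simple s * cs.wordProd l) > cs.length (cs.wordProd l)) :
    cs.IsReduced (s :: l) := by
  have h1 := cs.length_simple_mul (cs.wordProd l) s
  unfold CoxeterSystem.IsReduced at hl ⊢
  rw [cs.wordProd_cons]
  simp only [List.length_cons]
  omega

private lemma hecke_tail_reduced {s : S} {l : List S} (h : cs.IsReduced (s :: l)) :
    cs.IsReduced l ∧ cs.length (cs.simple s * cs.wordProd l) > cs.length (cs.wordProd l) := by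
  have h1 := cs.length_wordProd_le l
  have h2 := cs.length_simple_mul (cs.wordProd l) s
  unfold CoxeterSystem.IsReduced at h ⊢
  rw [cs.wordProd_cons] at h
  simp only [List.length_cons] at h
  constructor <;> omega

private lemma hecke_eig_prod (μ : S → ℝ) (ξ : W → ℝ)
    (h : ∀ s w, cs.length (cs.simple s * w) > cs.length w → ξ (cs.simple s * w) = μ s * ξ w) :
    ∀ l : List S, cs.IsReduced l → ξ (cs.wordProd l) = (l.map μ).prod * ξ 1 := by
  intro l
  induction l with
  | nil => intro _; simp [cs.wordProd_nil]
  | cons s l ih =>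
    intro hred
    obtain ⟨hl, hgt⟩ := hecke_tail_reduced cs hred
    rw [cs.wordProd_cons, h s _ hgt, ih hl]
    simp [mul_assoc]

private lemma hecke_sq_root {a μ : ℝ} (ha : 0 < a)
    (hμ : μ = Real.sqrt a ∨ μ = -1 / Real.sqrt a) :
    μ * μ = 1 + (a - 1) / Real.sqrt a * μ := by
  have hs : 0 < Real.sqrt a := Real.sqrt_pos.2 ha
  have hsq : Real.sqrt a * Real.sqrt a = a := Real.mul_self_sqrt ha.le
  rcases hμ with rfl | rfl
  · rw [div_mul_cancel₀ _ hs.ne', hsq]; ring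
  · field_simp
    rw [Real.sq_sqrt ha.le]; ring

private lemma hecke_root_cases {a μ : ℝ} (ha : 0 < a)
    (h : μ * μ = 1 + (a - 1) / Real.sqrt a * μ) :
    μ = Real.sqrt a ∨ μ = -1 / Real.sqrt a := by
  have hs : 0 < Real.sqrt a := Real.sqrt_pos.2 ha
  have ht2 : Real.sqrt a * Real.sqrt a = a := Real.mul_self_sqrt ha.le
  have hp : (a - 1) / Real.sqrt a * Real.sqrt a = a - 1 := div_mul_cancel₀ _ hs.ne'
  have key : (μ - Real.sqrt a) * (Real.sqrt a * μ + 1) = 0 := by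
    linear_combination Real.sqrt a * h + μ * hp - μ * ht2
  rcases mul_eq_zero.1 key with h' | h'
  · left; linarith
  · right
    field_simp
    linear_combination h'

private lemma hecke_fval {a : ℝ} (ha : 0 ≤ a) (b : Bool) :
    ((if b then (1:ℝ) else -1) * a ^ ((if b then (1:ℝ) else -1)/2)) =
      if b then Real.sqrt a else -1 / Real.sqrt a := by
  cases b with
  | true => simp [Real.sqrt_eq_rpow]
  | false =>
    have h1 : ((-1:ℝ))/2 = -(1/2) := by norm_num
    simp only [Bool.false_eq_true, if_false, h1, Real.rpow_neg ha, Real.sqrt_eq_rpow]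
    ring

private lemma hecke_prod_bound (q : S → ℝ) (hq : ∀ s, 0 < q s ∧ q s ≤ 1) (e : S → Bool)
    (l : List S) :
    0 < (l.map (fun v => Real.sqrt (q v))).prod ∧
    (l.map (fun v => Real.sqrt (q v))).prod ≤
      |(l.map (fun v => if e v then Real.sqrt (q v) else -1 / Real.sqrt (q v))).prod| := by
  induction l with
  | nil => simp
  | cons s l ih =>
    obtain ⟨ih1, ih2⟩ := ih
    have hs : 0 < Real.sqrt (q s) := Real.sqrt_pos.2 (hq s).1
    have h1 : Real.sqrt (q s) ≤ |if e s then Real.sqrt (q s) else -1 / Real.sqrt (q s)| := by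
      cases he : e s with
      | true => simp [abs_of_pos hs]
      | false =>
        have hle1 : Real.sqrt (q s) ≤ 1 := Real.sqrt_le_one.2 (hq s).2
        have : |(-1 : ℝ) / Real.sqrt (q s)| = 1 / Real.sqrt (q s) := by
          rw [abs_div, abs_neg, abs_one, abs_of_pos hs]
        simp only [Bool.false_eq_true, if_false, this]
        rw [le_div_iff₀ hs]
        nlinarith
    constructor
    · simp only [List.map_cons, List.prod_cons]
      exact mul_pos hs ih1
    · simp only [List.map_cons, List.prod_cons, abs_mul]
      exact mul_le_mul h1 ih2 ih1.le (abs_nonneg _)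

end HeckeAux

/-- Complete description of Hecke eigenvectors in `ℓ^r(W)` for a right-angled Coxeter system:
the left Hecke eigenvectors (nonzero `ξ` with `T_s^{(q)} ξ ∈ ℝξ` for all `s`) are exactly the
nonzero scalar multiples of the vectors `η_ε = ∑_w q_{w,ε}^{1/2} δ_w` for signs
`ε ∈ {-1,1}^S` with `∑_w |q_{w,ε}|^{r/2} < ∞`.  In particular, a Hecke eigenvector exists in
`ℓ^r(W)` if and only if `∑_w q_w^{r/2} < ∞`.  Signs are encoded by `Bool` (`true ↦ 1`,
`false ↦ -1`). -/
theorem hecke_eigenvectors_characterisation {S : Type*} {W : Type*} [Group W]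
    (M : CoxeterMatrix S) (cs : CoxeterSystem M W)
    (hra : ∀ s t : S, s ≠ t → M s t = 2 ∨ M s t = 0)
    (q : S → ℝ) (hq : ∀ s, 0 < q s ∧ q s ≤ 1)
    (r : ℝ) (hr : 1 ≤ r)
    (η : (S → Bool) → W → ℝ)
    (hη : ∀ (e : S → Bool) (l : List S), cs.IsReduced l →
      η e (cs.wordProd l) =
        (l.map (fun v => (if e v then (1 : ℝ) else -1)
          * q v ^ ((if e v then (1 : ℝ) else -1) / 2))).prod) :
    let T : S → (W → ℝ) → W → ℝ := fun s ξ w =>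
      if cs.length (cs.simple s * w) > cs.length w
        then ξ (cs.simple s * w)
        else ξ (cs.simple s * w) + (q s - 1) / Real.sqrt (q s) * ξ w
    (∀ ξ : W → ℝ, ξ ≠ 0 → Memℓp ξ (ENNReal.ofReal r) →
      ((∀ s : S, ∃ μ : ℝ, ∀ w : W, T s ξ w = μ * ξ w) ↔
        ∃ e : S → Bool, Memℓp (η e) (ENNReal.ofReal r) ∧
          ∃ c : ℝ, c ≠ 0 ∧ ξ = fun w => c * η e w)) ∧
    ((∃ ξ : W → ℝ, ξ ≠ 0 ∧ Memℓp ξ (ENNReal.ofReal r) ∧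
        ∀ s : S, ∃ μ : ℝ, ∀ w : W, T s ξ w = μ * ξ w) ↔
      Summable (fun w : W => (η (fun _ => true) w) ^ r)) := by
  intro T
  have hT : ∀ (s : S) (ξ : W → ℝ) (w : W), T s ξ w =
      (if cs.length (cs.simple s * w) > cs.length w then ξ (cs.simple s * w)
        else ξ (cs.simple s * w) + (q s - 1) / Real.sqrt (q s) * ξ w) := fun _ _ _ => rfl
  have hr0 : (0 : ℝ) < r := lt_of_lt_of_le one_pos hr
  have htr : (ENNReal.ofReal r).toReal = r := ENNReal.toReal_ofReal hr0.le
  -- converted product formula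
  have hη' : ∀ (e : S → Bool) (l : List S), cs.IsReduced l →
      η e (cs.wordProd l) =
        (l.map (fun v => if e v then Real.sqrt (q v) else -1 / Real.sqrt (q v))).prod := by
    intro e l hl
    rw [hη e l hl]
    congr 1
    exact List.map_congr_left fun a _ => hecke_fval (hq a).1.le (e a)
  have hηT : ∀ (l : List S), cs.IsReduced l →
      η (fun _ => true) (cs.wordProd l) = (l.map (fun v => Real.sqrt (q v))).prod := by
    intro l hl
    rw [hη' _ l hl]
    congr 1
    all_goals exact List.map_congr_left fun a _ => by simp
  have hpos : ∀ w : W, 0 < η (fun _ => true) w := by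
    intro w
    obtain ⟨l, hl, rfl⟩ := cs.exists_reduced_word' w
    rw [hηT l hl]
    exact (hecke_prod_bound q hq (fun _ => true) l).1
  -- η e satisfies the ascent recursion
  have step_up : ∀ (e : S → Bool) (s : S) (w : W),
      cs.length (cs.simple s * w) > cs.length w →
      η e (cs.simple s * w) =
        (if e s then Real.sqrt (q s) else -1 / Real.sqrt (q s)) * η e w := by
    intro e s w hgt
    obtain ⟨l, hl, rfl⟩ := cs.exists_reduced_word' w
    have hcons := hecke_isReduced_cons cs hl hgt
    rw [← cs.wordProd_cons, hη' e _ hcons, hη' e _ hl]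
    simp
  have muval_sq : ∀ (e : S → Bool) (s : S),
      (if e s then Real.sqrt (q s) else -1 / Real.sqrt (q s)) *
        (if e s then Real.sqrt (q s) else -1 / Real.sqrt (q s)) =
        1 + (q s - 1) / Real.sqrt (q s) *
          (if e s then Real.sqrt (q s) else -1 / Real.sqrt (q s)) := by
    intro e s
    apply hecke_sq_root (hq s).1
    split_ifs
    · exact Or.inl rfl
    · exact Or.inr rfl
  -- η e is an eigenvector
  have eta_eigen : ∀ (e : S → Bool) (s : S) (w : W),
      T s (η e) w = (if e s then Real.sqrt (q s) else -1 / Real.sqrt (q s)) * η e w := by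
    intro e s w
    rw [hT]
    by_cases h : cs.length (cs.simple s * w) > cs.length w
    · rw [if_pos h, step_up e s w h]
    · rw [if_neg h]
      have hw : cs.simple s * (cs.simple s * w) = w := by
        rw [← mul_assoc, cs.simple_mul_simple_self, one_mul]
      have hgt : cs.length (cs.simple s * (cs.simple s * w)) > cs.length (cs.simple s * w) := by
        rw [hw]
        rcases cs.length_simple_mul w s with h1 | h1 <;> omega
      have h2 := step_up e s _ hgt
      rw [hw] at h2
      rw [h2]
      linear_combination (-(η e (cs.simple s * w))) * muval_sq e s
  have Tsmul : ∀ (s : S) (ξ : W → ℝ) (c : ℝ) (w : W),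
      T s (fun w => c * ξ w) w = c * T s ξ w := by
    intro s ξ c w
    rw [hT s (fun w => c * ξ w) w, hT s ξ w]
    split_ifs <;> ring
  -- Part 1
  have part1 : ∀ ξ : W → ℝ, ξ ≠ 0 → Memℓp ξ (ENNReal.ofReal r) →
      ((∀ s : S, ∃ μ : ℝ, ∀ w : W, T s ξ w = μ * ξ w) ↔
        ∃ e : S → Bool, Memℓp (η e) (ENNReal.ofReal r) ∧
          ∃ c : ℝ, c ≠ 0 ∧ ξ = fun w => c * η e w) := by
    intro ξ hξ hmem
    constructor
    · intro heig
      choose μ hμ using heig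
      have hstep : ∀ s w, cs.length (cs.simple s * w) > cs.length w →
          ξ (cs.simple s * w) = μ s * ξ w := by
        intro s w h
        have := hμ s w
        rwa [hT, if_pos h] at this
      have hstep' : ∀ s w, ¬ (cs.length (cs.simple s * w) > cs.length w) →
          ξ (cs.simple s * w) + (q s - 1) / Real.sqrt (q s) * ξ w = μ s * ξ w := by
        intro s w h
        have := hμ s w
        rwa [hT, if_neg h] at this
      have hone : ξ 1 ≠ 0 := by
        intro h0
        apply hξ
        funext w
        obtain ⟨l, hl, rfl⟩ := cs.exists_reduced_word' w
        show ξ (cs.wordProd l) = 0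
        rw [hecke_eig_prod cs μ ξ hstep l hl, h0, mul_zero]
      have hquad : ∀ s, μ s = Real.sqrt (q s) ∨ μ s = -1 / Real.sqrt (q s) := by
        intro s
        apply hecke_root_cases (hq s).1
        have h1 : ξ (cs.simple s) = μ s * ξ 1 := by
          have := hstep s 1 (by simp)
          rwa [mul_one] at this
        have h2 : ξ 1 + (q s - 1) / Real.sqrt (q s) * ξ (cs.simple s) = μ s * ξ (cs.simple s) := by
          have := hstep' s (cs.simple s) (by rw [cs.simple_mul_simple_self]; simp)
          rwa [cs.simple_mul_simple_self] at this
        rw [h1] at h2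
        have h4 : (μ s * μ s - (1 + (q s - 1) / Real.sqrt (q s) * μ s)) * ξ 1 = 0 := by
          linear_combination -h2
        rcases mul_eq_zero.1 h4 with h5 | h5
        · linarith
        · exact absurd h5 hone
      set e : S → Bool := fun s => decide (0 < μ s) with he
      have hμe : ∀ s, μ s = if e s then Real.sqrt (q s) else -1 / Real.sqrt (q s) := by
        intro s
        have hs : 0 < Real.sqrt (q s) := Real.sqrt_pos.2 (hq s).1
        rcases hquad s with h | h
        · have heb : e s = true := by
            simp only [he, decide_eq_true_eq]
            rw [h]; exact hs
          simp [heb, h]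
        · have hneg : -1 / Real.sqrt (q s) < 0 := div_neg_of_neg_of_pos (by norm_num) hs
          have heb : e s = false := by
            simp only [he, decide_eq_false_iff_not]
            rw [h]; exact not_lt.2 hneg.le
          simp [heb, h]
      have hmapμ : ∀ l : List S,
          l.map (fun v => if e v then Real.sqrt (q v) else -1 / Real.sqrt (q v)) = l.map μ :=
        fun l => List.map_congr_left fun a _ => (hμe a).symm
      have hfun : η e = fun w => (ξ 1)⁻¹ * ξ w := by
        funext w
        obtain ⟨l, hl, rfl⟩ := cs.exists_reduced_word' w
        show η e (cs.wordProd l) = (ξ 1)⁻¹ * ξ (cs.wordProd l)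
        rw [hecke_eig_prod cs μ ξ hstep l hl, hη' e l hl, hmapμ l]
        field_simp
      refine ⟨e, ?_, ξ 1, hone, ?_⟩
      · rw [hfun]
        exact hmem.const_mul _
      · funext w
        obtain ⟨l, hl, rfl⟩ := cs.exists_reduced_word' w
        show ξ (cs.wordProd l) = ξ 1 * η e (cs.wordProd l)
        rw [hecke_eig_prod cs μ ξ hstep l hl, hη' e l hl, hmapμ l]
        ring
    · rintro ⟨e, hmeme, c, hc, rfl⟩
      intro s
      refine ⟨if e s then Real.sqrt (q s) else -1 / Real.sqrt (q s), fun w => ?_⟩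
      simp only [Tsmul, eta_eigen]
      ring
  refine ⟨part1, ?_, ?_⟩
  · rintro ⟨ξ, hξ, hmem, heig⟩
    obtain ⟨e, hmeme, c, hc, rfl⟩ := (part1 ξ hξ hmem).1 heig
    have hsum := (memℓp_gen_iff (by rw [htr]; exact hr0)).1 hmeme
    rw [htr] at hsum
    apply Summable.of_nonneg_of_le (fun w => Real.rpow_nonneg (hpos w).le r) _ hsum
    intro w
    rw [Real.norm_eq_abs]
    apply Real.rpow_le_rpow (hpos w).le _ hr0.le
    obtain ⟨l, hl, rfl⟩ := cs.exists_reduced_word' w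
    rw [hηT l hl, hη' e l hl]
    exact (hecke_prod_bound q hq e l).2
  · intro hsum
    have hmemη : Memℓp (η (fun _ => true)) (ENNReal.ofReal r) := by
      apply memℓp_gen
      rw [htr]
      exact hsum.congr fun w => by rw [Real.norm_eq_abs, abs_of_pos (hpos w)]
    have hηne : η (fun _ => true) ≠ 0 := by
      intro h0
      have := hpos 1
      rw [h0] at this
      simp at this
    refine ⟨η (fun _ => true), hηne, hmemη, fun s => ?_⟩
    exact ⟨if (fun _ : S => true) s then Real.sqrt (q s) else -1 / Real.sqrt (q s),
      fun w => eta_eigen (fun _ => true) s w⟩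
end
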